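/- arXiv:math/0205285 — 4 statements merged into one kernel-verified Lean document; each statement's English description precedes it below -/
import Mathlib

section
/- Let A be a bialgebra over ℂ such that the linear maps T₁, T₂ : A ⊗ A → A ⊗ A defined by T₁(a ⊗ a') = Δ(a)(1 ⊗ a') and T₂(a ⊗ a') = (a ⊗ 1)Δ(a') are bijective. Then A admits an antipode: there exists a linear map S : A → A such that m∘(S ⊗ id)∘Δ = η∘ε and m∘(id ⊗ S)∘Δ = η∘ε, where m : A ⊗ A → A is the multiplication and η : ℂ → A is the unit map. In particular A is a Hopf algebra. -/
/-!
STATEMENT 1: Let A be a bialgebra over ℂ such that the linear maps T₁, T₂ : A ⊗ A → A ⊗ A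
defined by T₁(a ⊗ a') = Δ(a)(1 ⊗ a') and T₂(a ⊗ a') = (a ⊗ 1)Δ(a') are bijective.
Then A admits an antipode: there is a linear map S : A → A with
m∘(S ⊗ id)∘Δ = η∘ε and m∘(id ⊗ S)∘Δ = η∘ε.  In particular A is a Hopf algebra.
-/

open scoped TensorProduct

noncomputable section AntipodeAux

open Coalgebra

namespace AntipodeAux

variable {R : Type*} {A : Type*} [CommSemiring R] [Semiring A] [Bialgebra R A]

/-- The convolution product on `A →ₗ[R] A`. -/
def conv (f g : A →ₗ[R] A) : A →ₗ[R] A :=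
  LinearMap.mul' R A ∘ₗ TensorProduct.map f g ∘ₗ Coalgebra.comul

lemma conv_apply (f g : A →ₗ[R] A) (a : A) {ι : Type*} (r : Coalgebra.Repr R a ι) :
    conv f g a = ∑ i ∈ r.index, f (r.left i) * g (r.right i) := by
  simp [conv, ← r.eq, map_sum]

lemma conv_counit_right (f : A →ₗ[R] A) :
    conv f (Algebra.linearMap R A ∘ₗ Coalgebra.counit) = f := by
  ext a
  set r := ℛ R a
  rw [conv_apply f _ a r]
  have h := congrArg (TensorProduct.rid R A) (sum_tmul_counit_eq r)
  simp only [map_sum, TensorProduct.rid_tmul, one_smul] at h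
  calc ∑ i ∈ r.index, f (r.left i) * (Algebra.linearMap R A ∘ₗ Coalgebra.counit) (r.right i)
      = ∑ i ∈ r.index, f (Coalgebra.counit (R := R) (r.right i) • r.left i) := by
        refine Finset.sum_congr rfl fun i _ => ?_
        simp [Algebra.algebraMap_eq_smul_one, Algebra.mul_smul_comm]
    _ = f a := by rw [← map_sum, h]

lemma conv_counit_left (f : A →ₗ[R] A) :
    conv (Algebra.linearMap R A ∘ₗ Coalgebra.counit) f = f := by
  ext a
  set r := ℛ R a
  rw [conv_apply _ f a r]
  have h := congrArg (TensorProduct.lid R A) (sum_counit_tmul_eq r)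
  simp only [map_sum, TensorProduct.lid_tmul, one_smul] at h
  calc ∑ i ∈ r.index, (Algebra.linearMap R A ∘ₗ Coalgebra.counit) (r.left i) * f (r.right i)
      = ∑ i ∈ r.index, f (Coalgebra.counit (R := R) (r.left i) • r.right i) := by
        refine Finset.sum_congr rfl fun i _ => ?_
        simp [Algebra.algebraMap_eq_smul_one, Algebra.smul_mul_assoc]
    _ = f a := by rw [← map_sum, h]

lemma conv_assoc (f g h : A →ₗ[R] A) : conv (conv f g) h = conv f (conv g h) := by
  ext a
  set r := ℛ R a with hr
  set a₁ : (i : r.ι) → Coalgebra.Repr R (r.left i) (A × A) := fun i => ℛ R (r.left i) with ha₁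
  set a₂ : (i : r.ι) → Coalgebra.Repr R (r.right i) (A × A) := fun i => ℛ R (r.right i) with ha₂
  have key := sum_map_tmul_tmul_eq f g h a (repr := r) (a₁ := a₁) (a₂ := a₂)
  have key2 := congrArg (LinearMap.mul' R A ∘ₗ LinearMap.lTensor A (LinearMap.mul' R A)) key
  simp only [map_sum, LinearMap.comp_apply, LinearMap.lTensor_tmul, LinearMap.mul'_apply] at key2
  rw [conv_apply (conv f g) h a r, conv_apply f (conv g h) a r]
  calc ∑ i ∈ r.index, conv f g (r.left i) * h (r.right i)
      = ∑ i ∈ r.index, ∑ j ∈ (a₁ i).index,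
          f ((a₁ i).left j) * (g ((a₁ i).right j) * h (r.right i)) := by
        refine Finset.sum_congr rfl fun i _ => ?_
        rw [conv_apply f g (r.left i) (a₁ i), Finset.sum_mul]
        exact Finset.sum_congr rfl fun j _ => (mul_assoc _ _ _)
    _ = ∑ i ∈ r.index, ∑ j ∈ (a₂ i).index,
          f (r.left i) * (g ((a₂ i).left j) * h ((a₂ i).right j)) := key2.symm
    _ = ∑ i ∈ r.index, f (r.left i) * conv g h (r.right i) := by
        refine Finset.sum_congr rfl fun i _ => ?_
        rw [conv_apply g h (r.right i) (a₂ i), Finset.mul_sum]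

end AntipodeAux

end AntipodeAux

theorem bialgebra_bijective_T1_T2_implies_antipode
    {A : Type*} [Semiring A] [Bialgebra ℂ A]
    (T₁ T₂ : A ⊗[ℂ] A →ₗ[ℂ] A ⊗[ℂ] A)
    (hT₁ : ∀ a a' : A, T₁ (a ⊗ₜ[ℂ] a') = Coalgebra.comul (R := ℂ) a * ((1 : A) ⊗ₜ[ℂ] a'))
    (hT₂ : ∀ a a' : A, T₂ (a ⊗ₜ[ℂ] a') = (a ⊗ₜ[ℂ] (1 : A)) * Coalgebra.comul (R := ℂ) a')
    (h₁ : Function.Bijective T₁) (h₂ : Function.Bijective T₂) :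
    ∃ S : A →ₗ[ℂ] A,
      LinearMap.mul' ℂ A ∘ₗ S.rTensor A ∘ₗ Coalgebra.comul =
        Algebra.linearMap ℂ A ∘ₗ Coalgebra.counit ∧
      LinearMap.mul' ℂ A ∘ₗ S.lTensor A ∘ₗ Coalgebra.comul =
        Algebra.linearMap ℂ A ∘ₗ Coalgebra.counit := by
  classical
  -- the linear equivalences defined by T₁, T₂ and their inverses
  set e₁ : A ⊗[ℂ] A ≃ₗ[ℂ] A ⊗[ℂ] A := LinearEquiv.ofBijective T₁ h₁ with he₁
  set e₂ : A ⊗[ℂ] A ≃ₗ[ℂ] A ⊗[ℂ] A := LinearEquiv.ofBijective T₂ h₂ with he₂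
  have he₁app : ∀ s, e₁ s = T₁ s := fun s => rfl
  have he₂app : ∀ s, e₂ s = T₂ s := fun s => rfl
  -- T₁ is right A-linear
  have hT₁m : ∀ (s : A ⊗[ℂ] A) (y : A), T₁ (s * ((1:A) ⊗ₜ[ℂ] y)) = T₁ s * ((1:A) ⊗ₜ[ℂ] y) := by
    intro s y
    induction s using TensorProduct.induction_on with
    | zero => simp
    | tmul x z =>
        rw [Algebra.TensorProduct.tmul_mul_tmul, mul_one, hT₁, hT₁, mul_assoc,
          Algebra.TensorProduct.tmul_mul_tmul, one_mul]
    | add u v hu hv => rw [add_mul, map_add, map_add, hu, hv, add_mul]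
  -- T₂ is left A-linear
  have hT₂m : ∀ (x : A) (s : A ⊗[ℂ] A), T₂ ((x ⊗ₜ[ℂ] (1:A)) * s) = (x ⊗ₜ[ℂ] (1:A)) * T₂ s := by
    intro x s
    induction s using TensorProduct.induction_on with
    | zero => simp
    | tmul z y =>
        rw [Algebra.TensorProduct.tmul_mul_tmul, one_mul, hT₂, hT₂, ← mul_assoc,
          Algebra.TensorProduct.tmul_mul_tmul, mul_one]
    | add u v hu hv => rw [mul_add, map_add, map_add, hu, hv, mul_add]
  -- the inverses inherit module linearity
  have hγ : ∀ (x y : A), e₁.symm (x ⊗ₜ[ℂ] y) = e₁.symm (x ⊗ₜ[ℂ] (1:A)) * ((1:A) ⊗ₜ[ℂ] y) := by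
    intro x y
    apply e₁.injective
    rw [e₁.apply_symm_apply, he₁app, hT₁m, ← he₁app, e₁.apply_symm_apply,
      Algebra.TensorProduct.tmul_mul_tmul, mul_one, one_mul]
  have hδ : ∀ (x y : A), e₂.symm (x ⊗ₜ[ℂ] y) = (x ⊗ₜ[ℂ] (1:A)) * e₂.symm ((1:A) ⊗ₜ[ℂ] y) := by
    intro x y
    apply e₂.injective
    rw [e₂.apply_symm_apply, he₂app, hT₂m, ← he₂app, e₂.apply_symm_apply,
      Algebra.TensorProduct.tmul_mul_tmul, mul_one, one_mul]
  -- the maps φ(x ⊗ y) = ε(x) • y and ψ(x ⊗ y) = ε(y) • x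
  set φ : A ⊗[ℂ] A →ₗ[ℂ] A :=
    (TensorProduct.lid ℂ A).toLinearMap ∘ₗ (Coalgebra.counit (R := ℂ) (A := A)).rTensor A with hφ
  set ψ : A ⊗[ℂ] A →ₗ[ℂ] A :=
    (TensorProduct.rid ℂ A).toLinearMap ∘ₗ (Coalgebra.counit (R := ℂ) (A := A)).lTensor A with hψ
  have hφapp : ∀ (x y : A), φ (x ⊗ₜ[ℂ] y) = Coalgebra.counit (R := ℂ) x • y := by
    intro x y; simp [hφ]
  have hψapp : ∀ (x y : A), ψ (x ⊗ₜ[ℂ] y) = Coalgebra.counit (R := ℂ) y • x := by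
    intro x y; simp [hψ]
  have hφmul : ∀ (s : A ⊗[ℂ] A) (y : A), φ (s * ((1:A) ⊗ₜ[ℂ] y)) = φ s * y := by
    intro s y
    induction s using TensorProduct.induction_on with
    | zero => simp
    | tmul p q =>
        rw [Algebra.TensorProduct.tmul_mul_tmul, mul_one, hφapp, hφapp, smul_mul_assoc]
    | add u v hu hv => rw [add_mul, map_add, hu, hv, map_add, add_mul]
  have hψmul : ∀ (x : A) (s : A ⊗[ℂ] A), ψ ((x ⊗ₜ[ℂ] (1:A)) * s) = x * ψ s := by
    intro x s
    induction s using TensorProduct.induction_on with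
    | zero => simp
    | tmul p q =>
        rw [Algebra.TensorProduct.tmul_mul_tmul, one_mul, hψapp, hψapp, mul_smul_comm]
    | add u v hu hv => rw [mul_add, map_add, hu, hv, map_add, mul_add]
  -- candidate antipodes
  set S₁ : A →ₗ[ℂ] A := φ ∘ₗ e₁.symm.toLinearMap ∘ₗ (TensorProduct.mk ℂ A A).flip 1 with hS₁def
  set S₂ : A →ₗ[ℂ] A := ψ ∘ₗ e₂.symm.toLinearMap ∘ₗ TensorProduct.mk ℂ A A 1 with hS₂def
  have hS₁app : ∀ x : A, S₁ x = φ (e₁.symm (x ⊗ₜ[ℂ] (1:A))) := fun x => rfl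
  have hS₂app : ∀ y : A, S₂ y = ψ (e₂.symm ((1:A) ⊗ₜ[ℂ] y)) := fun y => rfl
  -- key factorizations
  have key₁ : LinearMap.mul' ℂ A ∘ₗ S₁.rTensor A = φ ∘ₗ e₁.symm.toLinearMap := by
    apply TensorProduct.ext'
    intro x y
    simp only [LinearMap.comp_apply, LinearMap.rTensor_tmul, LinearMap.mul'_apply,
      LinearEquiv.coe_coe]
    rw [hγ, hφmul, hS₁app]
  have key₂ : LinearMap.mul' ℂ A ∘ₗ S₂.lTensor A = ψ ∘ₗ e₂.symm.toLinearMap := by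
    apply TensorProduct.ext'
    intro x y
    simp only [LinearMap.comp_apply, LinearMap.lTensor_tmul, LinearMap.mul'_apply,
      LinearEquiv.coe_coe]
    rw [hδ, hψmul, hS₂app]
  have hγΔ : ∀ a : A, e₁.symm (Coalgebra.comul (R := ℂ) a) = a ⊗ₜ[ℂ] (1:A) := by
    intro a
    apply e₁.injective
    rw [e₁.apply_symm_apply, he₁app, hT₁, ← Algebra.TensorProduct.one_def, mul_one]
  have hδΔ : ∀ a : A, e₂.symm (Coalgebra.comul (R := ℂ) a) = (1:A) ⊗ₜ[ℂ] a := by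
    intro a
    apply e₂.injective
    rw [e₂.apply_symm_apply, he₂app, hT₂, ← Algebra.TensorProduct.one_def, one_mul]
  -- S₁ is a left convolution inverse of the identity, S₂ a right one
  have hleft : LinearMap.mul' ℂ A ∘ₗ S₁.rTensor A ∘ₗ Coalgebra.comul =
      Algebra.linearMap ℂ A ∘ₗ Coalgebra.counit := by
    ext a
    rw [LinearMap.comp_apply, LinearMap.comp_apply, ← LinearMap.comp_apply
      (LinearMap.mul' ℂ A), key₁]
    simp only [LinearMap.comp_apply, LinearEquiv.coe_coe]
    rw [hγΔ, hφapp, Algebra.linearMap_apply, Algebra.algebraMap_eq_smul_one]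
  have hright : LinearMap.mul' ℂ A ∘ₗ S₂.lTensor A ∘ₗ Coalgebra.comul =
      Algebra.linearMap ℂ A ∘ₗ Coalgebra.counit := by
    ext a
    rw [LinearMap.comp_apply, LinearMap.comp_apply, ← LinearMap.comp_apply
      (LinearMap.mul' ℂ A), key₂]
    simp only [LinearMap.comp_apply, LinearEquiv.coe_coe]
    rw [hδΔ, hψapp, Algebra.linearMap_apply, Algebra.algebraMap_eq_smul_one]
  -- convolution algebra argument: S₁ = S₂
  have hc1 : AntipodeAux.conv S₁ LinearMap.id = Algebra.linearMap ℂ A ∘ₗ Coalgebra.counit := by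
    rw [AntipodeAux.conv, show TensorProduct.map S₁ LinearMap.id = S₁.rTensor A from rfl,
      ← LinearMap.comp_assoc]
    rw [← LinearMap.comp_assoc] at hleft
    exact hleft
  have hc2 : AntipodeAux.conv LinearMap.id S₂ = Algebra.linearMap ℂ A ∘ₗ Coalgebra.counit := by
    rw [AntipodeAux.conv, show TensorProduct.map LinearMap.id S₂ = S₂.lTensor A from rfl,
      ← LinearMap.comp_assoc]
    rw [← LinearMap.comp_assoc] at hright
    exact hright
  have hS₁₂ : S₁ = S₂ := by
    calc S₁ = AntipodeAux.conv S₁ (Algebra.linearMap ℂ A ∘ₗ Coalgebra.counit) :=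
          (AntipodeAux.conv_counit_right S₁).symm
      _ = AntipodeAux.conv S₁ (AntipodeAux.conv LinearMap.id S₂) := by rw [hc2]
      _ = AntipodeAux.conv (AntipodeAux.conv S₁ LinearMap.id) S₂ :=
          (AntipodeAux.conv_assoc S₁ LinearMap.id S₂).symm
      _ = AntipodeAux.conv (Algebra.linearMap ℂ A ∘ₗ Coalgebra.counit) S₂ := by rw [hc1]
      _ = S₂ := AntipodeAux.conv_counit_left S₂
  exact ⟨S₁, hleft, by rw [hS₁₂]; exact hright⟩
end

section
/- Let A be a finite-dimensional Hopf algebra over ℂ and let φ be a left integral on A. Then there exists an invertible group-like element δ ∈ A (i.e. Δ(δ) = δ ⊗ δ and ε(δ) = 1) such that (φ ⊗ id)(Δ(a)) = φ(a)·δ for all a ∈ A. -/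
/-!
STATEMENT 5: Let A be a finite-dimensional Hopf algebra over ℂ and let φ be a left
integral on A.  Then there exists an invertible group-like element δ ∈ A
(i.e. Δ(δ) = δ ⊗ δ and ε(δ) = 1) such that (φ ⊗ id)(Δ(a)) = φ(a)·δ for all a ∈ a.
-/

open scoped TensorProduct

/-- A left integral on a Hopf algebra `A` over `ℂ`: a nonzero linear functional `φ` with
`(id ⊗ φ)(Δ(a)) = φ(a)·1` for all `a`. -/
def IsLeftIntegral {A : Type*} [Semiring A] [HopfAlgebra ℂ A] (φ : A →ₗ[ℂ] ℂ) : Prop :=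
  φ ≠ 0 ∧ ∀ a : A, TensorProduct.rid ℂ A (φ.lTensor A (Coalgebra.comul (R := ℂ) a)) = φ a • 1

namespace ModularElementAux

open Coalgebra HopfAlgebra LinearMap

variable {A : Type*} [Ring A] [HopfAlgebra ℂ A] {ι : Type*}

/-- The map `A ⊗ A → A`, `x ⊗ y ↦ ψ y • x`. -/
noncomputable def muR (ψ : A →ₗ[ℂ] ℂ) : A ⊗[ℂ] A →ₗ[ℂ] A :=
  (TensorProduct.rid ℂ A).toLinearMap ∘ₗ ψ.lTensor A

@[simp] lemma muR_tmul (ψ : A →ₗ[ℂ] ℂ) (x y : A) : muR ψ (x ⊗ₜ[ℂ] y) = ψ y • x := by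
  simp [muR]

/-- The map `a ↦ ∑ φ(a₍₁₎) • a₍₂₎`. -/
noncomputable def Tmap (φ : A →ₗ[ℂ] ℂ) : A →ₗ[ℂ] A :=
  (TensorProduct.lid ℂ A).toLinearMap ∘ₗ φ.rTensor A ∘ₗ comul

/-- The bilinear form `x, k ↦ φ (x * k)`. -/
noncomputable def Bil (φ : A →ₗ[ℂ] ℂ) : A →ₗ[ℂ] A →ₗ[ℂ] ℂ :=
  (LinearMap.mul ℂ A).compr₂ φ

@[simp] lemma Bil_apply (φ : A →ₗ[ℂ] ℂ) (x k : A) : Bil φ x k = φ (x * k) := rfl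

lemma muR_repr (ψ : A →ₗ[ℂ] ℂ) {a : A} (r : Coalgebra.Repr ℂ a ι) :
    muR ψ (comul a) = ∑ i ∈ r.index, ψ (r.right i) • r.left i := by
  rw [← r.eq, map_sum]; simp

lemma Tmap_repr (φ : A →ₗ[ℂ] ℂ) {a : A} (r : Coalgebra.Repr ℂ a ι) :
    Tmap φ a = ∑ i ∈ r.index, φ (r.left i) • r.right i := by
  simp only [Tmap, LinearMap.comp_apply, LinearEquiv.coe_coe]
  rw [← r.eq, map_sum]; simp

lemma sum_counit_smul {a : A} (r : Coalgebra.Repr ℂ a ι) :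
    ∑ i ∈ r.index, counit (R := ℂ) (r.left i) • r.right i = a := by
  have := congrArg (TensorProduct.lid ℂ A) (sum_counit_tmul_eq r)
  simp only [map_sum, TensorProduct.lid_tmul, one_smul] at this
  exact this

lemma sum_smul_counit {a : A} (r : Coalgebra.Repr ℂ a ι) :
    ∑ i ∈ r.index, counit (R := ℂ) (r.right i) • r.left i = a := by
  have := congrArg (TensorProduct.rid ℂ A) (sum_tmul_counit_eq r)
  simp only [map_sum, TensorProduct.rid_tmul, one_smul] at this
  exact this

lemma counit_sum_eq (ψ : A →ₗ[ℂ] ℂ) {a : A} (r : Coalgebra.Repr ℂ a ι) :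
    ψ a = ∑ i ∈ r.index, counit (R := ℂ) (r.left i) * ψ (r.right i) := by
  conv_lhs => rw [← sum_counit_smul r]
  rw [map_sum]
  simp [smul_eq_mul]

lemma muR_counit_comul (h : A) :
    muR (counit (R := ℂ)) (comul (R := ℂ) h) = h := by
  simp only [muR, LinearMap.comp_apply, LinearEquiv.coe_coe, lTensor_counit_comul,
    TensorProduct.rid_tmul, one_smul]

/-- For any "left integral-like" functional `ψ` we have `∑ ψ(a₍₂₎) • S(a₍₁₎) = ψ(a)·1`. -/
lemma twist {ψ : A →ₗ[ℂ] ℂ} (hψ : ∀ a : A, muR ψ (comul a) = ψ a • 1)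
    {a : A} (r : Coalgebra.Repr ℂ a ι) :
    ∑ i ∈ r.index, ψ (r.right i) • antipode (R := ℂ) (r.left i) = ψ a • 1 := by
  classical
  have key := congrArg (LinearMap.mul' ℂ A ∘ₗ TensorProduct.map (antipode (R := ℂ)) (muR ψ))
    (sum_tmul_tmul_eq r (fun i => ℛ ℂ (r.left i)) (fun i => ℛ ℂ (r.right i)))
  simp only [map_sum, LinearMap.comp_apply, TensorProduct.map_tmul, LinearMap.mul'_apply,
    muR_tmul, mul_smul_comm] at key
  have lhs_eq : ∀ i ∈ r.index,
      ∑ j ∈ (ℛ ℂ (r.left i)).index, ψ (r.right i) •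
        (antipode (R := ℂ) ((ℛ ℂ (r.left i)).left j) * ((ℛ ℂ (r.left i)).right j))
      = (counit (R := ℂ) (r.left i) * ψ (r.right i)) • (1 : A) := by
    intro i _
    rw [← Finset.smul_sum, sum_antipode_mul_eq_smul (ℛ ℂ (r.left i)), smul_smul, mul_comm]
  have rhs_eq : ∀ i ∈ r.index,
      ∑ j ∈ (ℛ ℂ (r.right i)).index, ψ ((ℛ ℂ (r.right i)).right j) •
        (antipode (R := ℂ) (r.left i) * ((ℛ ℂ (r.right i)).left j))
      = ψ (r.right i) • antipode (R := ℂ) (r.left i) := by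
    intro i _
    simp only [← mul_smul_comm, ← Finset.mul_sum]
    rw [← muR_repr ψ (ℛ ℂ (r.right i)), hψ, mul_smul_comm, mul_one]
  have key2 : ∑ i ∈ r.index, (counit (R := ℂ) (r.left i) * ψ (r.right i)) • (1 : A)
      = ∑ i ∈ r.index, ψ (r.right i) • antipode (R := ℂ) (r.left i) :=
    (Finset.sum_congr rfl lhs_eq).symm.trans (key.trans (Finset.sum_congr rfl rhs_eq))
  rw [← key2, ← Finset.sum_smul, ← counit_sum_eq ψ r]

lemma muR_prod (φ : A →ₗ[ℂ] ℂ) {h : A} (rh : Coalgebra.Repr ℂ h ι) (m w : A) :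
    muR φ ((m ⊗ₜ[ℂ] w) * comul (R := ℂ) h)
      = ∑ k ∈ rh.index, φ (w * rh.right k) • (m * rh.left k) := by
  rw [← rh.eq, Finset.mul_sum, map_sum]
  simp [Algebra.TensorProduct.tmul_mul_tmul]

/-- The fundamental identity `∑ φ(a·h₍₂₎) • h₍₁₎ = ∑ φ(a₍₂₎·h) • S(a₍₁₎)`. -/
lemma star (φ : A →ₗ[ℂ] ℂ) (hφ : ∀ a : A, muR φ (comul a) = φ a • 1)
    {a h : A} (ra : Coalgebra.Repr ℂ a ι) (rh : Coalgebra.Repr ℂ h ι) :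
    ∑ k ∈ rh.index, φ (a * rh.right k) • rh.left k
      = ∑ i ∈ ra.index, φ (ra.right i * h) • antipode (R := ℂ) (ra.left i) := by
  classical
  have key := congrArg (LinearMap.mul' ℂ A ∘ₗ
      TensorProduct.map (antipode (R := ℂ)) (muR φ ∘ₗ LinearMap.mulRight ℂ (comul (R := ℂ) h)))
    (sum_tmul_tmul_eq ra (fun i => ℛ ℂ (ra.left i)) (fun i => ℛ ℂ (ra.right i)))
  simp only [map_sum, LinearMap.comp_apply, TensorProduct.map_tmul, LinearMap.mul'_apply,
    LinearMap.mulRight_apply] at key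
  have lhs_eq : ∀ i ∈ ra.index,
      ∑ j ∈ (ℛ ℂ (ra.left i)).index,
        antipode (R := ℂ) ((ℛ ℂ (ra.left i)).left j) *
          muR φ ((((ℛ ℂ (ra.left i)).right j) ⊗ₜ[ℂ] ra.right i) * comul (R := ℂ) h)
      = ∑ k ∈ rh.index,
          (counit (R := ℂ) (ra.left i) * φ (ra.right i * rh.right k)) • rh.left k := by
    intro i _
    calc
      ∑ j ∈ (ℛ ℂ (ra.left i)).index,
          antipode (R := ℂ) ((ℛ ℂ (ra.left i)).left j) *
            muR φ ((((ℛ ℂ (ra.left i)).right j) ⊗ₜ[ℂ] ra.right i) * comul (R := ℂ) h)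
          = ∑ j ∈ (ℛ ℂ (ra.left i)).index, ∑ k ∈ rh.index,
              φ (ra.right i * rh.right k) •
                ((antipode (R := ℂ) ((ℛ ℂ (ra.left i)).left j) * ((ℛ ℂ (ra.left i)).right j)) *
                  rh.left k) := by
            simp [muR_prod φ rh, Finset.mul_sum, mul_smul_comm, mul_assoc]
      _ = ∑ k ∈ rh.index, ∑ j ∈ (ℛ ℂ (ra.left i)).index,
              φ (ra.right i * rh.right k) •
                ((antipode (R := ℂ) ((ℛ ℂ (ra.left i)).left j) * ((ℛ ℂ (ra.left i)).right j)) *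
                  rh.left k) := Finset.sum_comm
      _ = ∑ k ∈ rh.index, φ (ra.right i * rh.right k) •
              ((counit (R := ℂ) (ra.left i) • (1 : A)) * rh.left k) := by
            refine Finset.sum_congr rfl fun k _ => ?_
            rw [← Finset.smul_sum, ← Finset.sum_mul, sum_antipode_mul_eq_smul (ℛ ℂ (ra.left i))]
      _ = ∑ k ∈ rh.index,
            (counit (R := ℂ) (ra.left i) * φ (ra.right i * rh.right k)) • rh.left k := by
            refine Finset.sum_congr rfl fun k _ => ?_
            rw [smul_mul_assoc, one_mul, smul_smul, mul_comm]
  have rhs_eq : ∀ i ∈ ra.index,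
      ∑ j ∈ (ℛ ℂ (ra.right i)).index,
        antipode (R := ℂ) (ra.left i) *
          muR φ ((((ℛ ℂ (ra.right i)).left j) ⊗ₜ[ℂ] ((ℛ ℂ (ra.right i)).right j)) *
            comul (R := ℂ) h)
      = φ (ra.right i * h) • antipode (R := ℂ) (ra.left i) := by
    intro i _
    rw [← Finset.mul_sum]
    have : ∑ j ∈ (ℛ ℂ (ra.right i)).index,
        muR φ ((((ℛ ℂ (ra.right i)).left j) ⊗ₜ[ℂ] ((ℛ ℂ (ra.right i)).right j)) *
          comul (R := ℂ) h) = φ (ra.right i * h) • 1 := by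
      rw [← map_sum, ← Finset.sum_mul, (ℛ ℂ (ra.right i)).eq, ← Bialgebra.comul_mul, hφ]
    rw [this, mul_smul_comm, mul_one]
  have key2 : ∑ i ∈ ra.index, ∑ k ∈ rh.index,
        (counit (R := ℂ) (ra.left i) * φ (ra.right i * rh.right k)) • rh.left k
      = ∑ i ∈ ra.index, φ (ra.right i * h) • antipode (R := ℂ) (ra.left i) :=
    (Finset.sum_congr rfl lhs_eq).symm.trans (key.trans (Finset.sum_congr rfl rhs_eq))
  rw [← key2, Finset.sum_comm]
  refine Finset.sum_congr rfl fun k _ => ?_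
  rw [← Finset.sum_smul]
  congr 1
  exact counit_sum_eq (φ ∘ₗ LinearMap.mulRight ℂ (rh.right k)) ra

lemma basis_expand {ι : Type*} [Fintype ι] (b : Module.Basis ι ℂ A) (w : A ⊗[ℂ] A) :
    w = ∑ α, b α ⊗ₜ[ℂ] (TensorProduct.lid ℂ A ((b.coord α).rTensor A w)) := by
  induction w with
  | zero => simp
  | tmul x y =>
      conv_lhs => rw [← b.sum_repr x]
      rw [TensorProduct.sum_tmul]
      refine Finset.sum_congr rfl fun α _ => ?_
      rw [TensorProduct.smul_tmul]
      simp [Module.Basis.coord_apply]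
  | add u v hu hv =>
      simp only [map_add, TensorProduct.tmul_add, Finset.sum_add_distrib, ← hu, ← hv]

/-- The pairing `(x, h) ↦ φ(x·h)` is nondegenerate in the second variable. -/
lemma ker_triv [FiniteDimensional ℂ A] (φ : A →ₗ[ℂ] ℂ) (hφ0 : φ ≠ 0)
    (hφ : ∀ a : A, muR φ (comul a) = φ a • 1) :
    ∀ h : A, (∀ x : A, φ (x * h) = 0) → h = 0 := by
  classical
  obtain ⟨x0, hx0⟩ : ∃ x, φ x ≠ 0 := by
    by_contra hc
    push_neg at hc
    exact hφ0 (LinearMap.ext fun x => hc x)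
  set b := Module.finBasis ℂ A with hb
  set cc : A → _ → A := fun k α =>
    TensorProduct.lid ℂ A ((b.coord α).rTensor A (comul (R := ℂ) k)) with hcc
  have hexp : ∀ k : A, comul (R := ℂ) k = ∑ α, b α ⊗ₜ[ℂ] cc k α := fun k =>
    basis_expand b _
  have comp : ∀ k : A, (∀ x, φ (x * k) = 0) → ∀ α (x : A), φ (x * cc k α) = 0 := by
    intro k hk α x
    have h1 : muR (φ ∘ₗ LinearMap.mulLeft ℂ x) (comul (R := ℂ) k) = 0 := by
      rw [muR_repr _ (ℛ ℂ k)]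
      simp only [LinearMap.comp_apply, LinearMap.mulLeft_apply]
      rw [star φ hφ (ℛ ℂ x) (ℛ ℂ k)]
      simp [hk]
    rw [hexp k, map_sum] at h1
    simp only [muR_tmul, LinearMap.comp_apply, LinearMap.mulLeft_apply] at h1
    exact Fintype.linearIndependent_iff.mp b.linearIndependent
      (fun α => φ (x * cc k α)) h1 α
  have eps : ∀ k : A, (∀ x, φ (x * k) = 0) → counit (R := ℂ) k = 0 := by
    intro k hk
    have h2 := mul_antipode_rTensor_comul_apply (R := ℂ) k
    rw [hexp k, map_sum, map_sum] at h2
    simp only [LinearMap.rTensor_tmul, LinearMap.mul'_apply] at h2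
    have h3 := congrArg (fun y => φ (x0 * y)) h2
    rw [Finset.mul_sum, map_sum, Finset.sum_eq_zero (fun α _ => by
        rw [← mul_assoc]; exact comp k hk α _)] at h3
    rw [Algebra.algebraMap_eq_smul_one, mul_smul_comm, mul_one, map_smul, smul_eq_mul] at h3
    rcases mul_eq_zero.mp h3.symm with h | h
    · exact h
    · exact absurd h hx0
  intro h hN
  have h4 := muR_counit_comul (A := A) h
  rw [hexp h, map_sum] at h4
  simp only [muR_tmul] at h4
  rw [← h4]
  exact Finset.sum_eq_zero fun α _ => by rw [eps (cc h α) (comp h hN α), zero_smul]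

lemma flip_bijective [FiniteDimensional ℂ A] (φ : A →ₗ[ℂ] ℂ) (hφ0 : φ ≠ 0)
    (hφ : ∀ a : A, muR φ (comul a) = φ a • 1) :
    Function.Bijective ((Bil φ).flip) := by
  have hinj : Function.Injective ((Bil φ).flip) := by
    rw [← LinearMap.ker_eq_bot, LinearMap.ker_eq_bot']
    intro h hker
    exact ker_triv φ hφ0 hφ h fun x => by
      simpa using LinearMap.congr_fun hker x
  exact ⟨hinj, (LinearMap.injective_iff_surjective_of_finrank_eq_finrank
    (Subspace.dual_finrank_eq (V := A)).symm).mp hinj⟩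

lemma exists_counit_rep [FiniteDimensional ℂ A] (φ : A →ₗ[ℂ] ℂ) (hφ0 : φ ≠ 0)
    (hφ : ∀ a : A, muR φ (comul a) = φ a • 1) :
    ∃ a0 : A, ∀ k : A, φ (a0 * k) = counit (R := ℂ) k := by
  set e : A ≃ₗ[ℂ] Module.Dual ℂ A :=
    LinearEquiv.ofBijective _ (flip_bijective φ hφ0 hφ) with he
  set ξ : Module.Dual ℂ (Module.Dual ℂ A) := e.dualMap.symm (counit (R := ℂ)) with hξ
  refine ⟨(Module.evalEquiv ℂ A).symm ξ, fun k => ?_⟩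
  have h1 : φ (((Module.evalEquiv ℂ A).symm ξ) * k)
      = (e k) ((Module.evalEquiv ℂ A).symm ξ) := rfl
  rw [h1, ← Module.Dual.eval_apply (R := ℂ), ← Module.evalEquiv_apply,
    LinearEquiv.apply_symm_apply]
  have h2 : ξ (e k) = (e.dualMap ξ) k := rfl
  rw [h2, hξ, LinearEquiv.apply_symm_apply]

/-- Uniqueness of left integrals. -/
lemma unique_integral [FiniteDimensional ℂ A] (φ : A →ₗ[ℂ] ℂ) (hφ0 : φ ≠ 0)
    (hφ : ∀ a : A, muR φ (comul a) = φ a • 1)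
    (ψ : A →ₗ[ℂ] ℂ) (hψ : ∀ a : A, muR ψ (comul a) = ψ a • 1) :
    ∃ c : ℂ, ∀ x : A, ψ x = c * φ x := by
  obtain ⟨h, hh⟩ := (flip_bijective φ hφ0 hφ).2 ψ
  have hh' : ∀ x : A, φ (x * h) = ψ x := fun x => by
    rw [← LinearMap.congr_fun hh x]; rfl
  obtain ⟨a0, ha0⟩ := exists_counit_rep φ hφ0 hφ
  have hstar := star φ hφ (ℛ ℂ a0) (ℛ ℂ h)
  have hL : ∑ k ∈ (ℛ ℂ h).index, φ (a0 * (ℛ ℂ h).right k) • (ℛ ℂ h).left k = h := by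
    rw [Finset.sum_congr rfl fun k _ => by rw [ha0 ((ℛ ℂ h).right k)]]
    exact sum_smul_counit (ℛ ℂ h)
  have hR : ∑ i ∈ (ℛ ℂ a0).index,
      φ ((ℛ ℂ a0).right i * h) • antipode (R := ℂ) ((ℛ ℂ a0).left i) = ψ a0 • 1 := by
    rw [Finset.sum_congr rfl fun i _ => by rw [hh' ((ℛ ℂ a0).right i)]]
    exact twist hψ (ℛ ℂ a0)
  have hheq : h = ψ a0 • (1 : A) := by rw [← hL, hstar, hR]
  refine ⟨ψ a0, fun x => ?_⟩
  rw [← hh' x, hheq, mul_smul_comm, mul_one, map_smul, smul_eq_mul]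

/-- For any functional `f`, the functional `f ∘ T` is again a left integral (or zero). -/
lemma Tf_integral (φ : A →ₗ[ℂ] ℂ) (hφ : ∀ a : A, muR φ (comul a) = φ a • 1)
    (f : A →ₗ[ℂ] ℂ) (a : A) :
    muR (f ∘ₗ Tmap φ) (comul a) = (f ∘ₗ Tmap φ) a • 1 := by
  classical
  have key := congrArg ((TensorProduct.rid ℂ A).toLinearMap ∘ₗ
      (((TensorProduct.lid ℂ ℂ).toLinearMap ∘ₗ TensorProduct.map φ f).lTensor A))
    (sum_tmul_tmul_eq (ℛ ℂ a) (fun i => ℛ ℂ ((ℛ ℂ a).left i))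
      (fun i => ℛ ℂ ((ℛ ℂ a).right i)))
  simp only [map_sum, LinearMap.comp_apply, LinearMap.lTensor_tmul, LinearEquiv.coe_coe,
    TensorProduct.map_tmul, TensorProduct.lid_tmul, TensorProduct.rid_tmul, smul_eq_mul] at key
  have hL : ∀ i ∈ (ℛ ℂ a).index,
      ∑ j ∈ (ℛ ℂ ((ℛ ℂ a).left i)).index,
        (φ ((ℛ ℂ ((ℛ ℂ a).left i)).right j) * f ((ℛ ℂ a).right i)) •
          (ℛ ℂ ((ℛ ℂ a).left i)).left j
      = (φ ((ℛ ℂ a).left i) * f ((ℛ ℂ a).right i)) • (1 : A) := by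
    intro i _
    have : ∀ j, (φ ((ℛ ℂ ((ℛ ℂ a).left i)).right j) * f ((ℛ ℂ a).right i)) •
          (ℛ ℂ ((ℛ ℂ a).left i)).left j
        = f ((ℛ ℂ a).right i) •
            (φ ((ℛ ℂ ((ℛ ℂ a).left i)).right j) • (ℛ ℂ ((ℛ ℂ a).left i)).left j) := by
      intro j; rw [smul_smul, mul_comm]
    rw [Finset.sum_congr rfl fun j _ => this j, ← Finset.smul_sum,
      ← muR_repr φ (ℛ ℂ ((ℛ ℂ a).left i)), hφ, smul_smul, mul_comm]
  have hR : ∀ i ∈ (ℛ ℂ a).index,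
      ∑ j ∈ (ℛ ℂ ((ℛ ℂ a).right i)).index,
        (φ ((ℛ ℂ ((ℛ ℂ a).right i)).left j) * f ((ℛ ℂ ((ℛ ℂ a).right i)).right j)) •
          (ℛ ℂ a).left i
      = (f ∘ₗ Tmap φ) ((ℛ ℂ a).right i) • (ℛ ℂ a).left i := by
    intro i _
    rw [← Finset.sum_smul]
    congr 1
    rw [LinearMap.comp_apply, Tmap_repr φ (ℛ ℂ ((ℛ ℂ a).right i)), map_sum]
    simp [smul_eq_mul]
  rw [muR_repr (f ∘ₗ Tmap φ) (ℛ ℂ a)]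
  have key2 : ∑ i ∈ (ℛ ℂ a).index, (φ ((ℛ ℂ a).left i) * f ((ℛ ℂ a).right i)) • (1 : A)
      = ∑ i ∈ (ℛ ℂ a).index, (f ∘ₗ Tmap φ) ((ℛ ℂ a).right i) • (ℛ ℂ a).left i :=
    (Finset.sum_congr rfl hL).symm.trans (key.trans (Finset.sum_congr rfl hR))
  rw [← key2, ← Finset.sum_smul]
  congr 1
  rw [LinearMap.comp_apply, Tmap_repr φ (ℛ ℂ a), map_sum]
  simp [smul_eq_mul]

lemma comul_Tmap (φ : A →ₗ[ℂ] ℂ) (δ : A) (hδ : ∀ a : A, Tmap φ a = φ a • δ) (a : A) :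
    comul (R := ℂ) (Tmap φ a) = δ ⊗ₜ[ℂ] (Tmap φ a) := by
  classical
  have key := congrArg ((TensorProduct.lid ℂ (A ⊗[ℂ] A)).toLinearMap ∘ₗ
      φ.rTensor (A ⊗[ℂ] A))
    (sum_tmul_tmul_eq (ℛ ℂ a) (fun i => ℛ ℂ ((ℛ ℂ a).left i))
      (fun i => ℛ ℂ ((ℛ ℂ a).right i)))
  simp only [map_sum, LinearMap.comp_apply, LinearMap.rTensor_tmul, LinearEquiv.coe_coe,
    TensorProduct.lid_tmul] at key
  have hL : ∀ i ∈ (ℛ ℂ a).index,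
      ∑ j ∈ (ℛ ℂ ((ℛ ℂ a).left i)).index,
        φ ((ℛ ℂ ((ℛ ℂ a).left i)).left j) •
          ((ℛ ℂ ((ℛ ℂ a).left i)).right j ⊗ₜ[ℂ] (ℛ ℂ a).right i)
      = δ ⊗ₜ[ℂ] (φ ((ℛ ℂ a).left i) • (ℛ ℂ a).right i) := by
    intro i _
    rw [Finset.sum_congr rfl fun j _ => TensorProduct.smul_tmul' _ _ _,
      ← TensorProduct.sum_tmul, ← Tmap_repr φ (ℛ ℂ ((ℛ ℂ a).left i)), hδ,
      TensorProduct.smul_tmul]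
  have hR : ∀ i ∈ (ℛ ℂ a).index,
      ∑ j ∈ (ℛ ℂ ((ℛ ℂ a).right i)).index,
        φ ((ℛ ℂ a).left i) •
          ((ℛ ℂ ((ℛ ℂ a).right i)).left j ⊗ₜ[ℂ] (ℛ ℂ ((ℛ ℂ a).right i)).right j)
      = φ ((ℛ ℂ a).left i) • comul (R := ℂ) ((ℛ ℂ a).right i) := by
    intro i _
    rw [← Finset.smul_sum, (ℛ ℂ ((ℛ ℂ a).right i)).eq]
  have key2 : ∑ i ∈ (ℛ ℂ a).index, δ ⊗ₜ[ℂ] (φ ((ℛ ℂ a).left i) • (ℛ ℂ a).right i)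
      = ∑ i ∈ (ℛ ℂ a).index, φ ((ℛ ℂ a).left i) • comul (R := ℂ) ((ℛ ℂ a).right i) :=
    (Finset.sum_congr rfl hL).symm.trans (key.trans (Finset.sum_congr rfl hR))
  calc comul (R := ℂ) (Tmap φ a)
      = comul (R := ℂ) (∑ i ∈ (ℛ ℂ a).index, φ ((ℛ ℂ a).left i) • (ℛ ℂ a).right i) := by
        rw [← Tmap_repr φ (ℛ ℂ a)]
    _ = ∑ i ∈ (ℛ ℂ a).index, φ ((ℛ ℂ a).left i) • comul (R := ℂ) ((ℛ ℂ a).right i) := by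
        rw [map_sum]; simp
    _ = ∑ i ∈ (ℛ ℂ a).index, δ ⊗ₜ[ℂ] (φ ((ℛ ℂ a).left i) • (ℛ ℂ a).right i) := key2.symm
    _ = δ ⊗ₜ[ℂ] (Tmap φ a) := by
        rw [← TensorProduct.tmul_sum, ← Tmap_repr φ (ℛ ℂ a)]

lemma counit_Tmap (φ : A →ₗ[ℂ] ℂ) (a : A) :
    counit (R := ℂ) (Tmap φ a) = φ a := by
  rw [Tmap_repr φ (ℛ ℂ a), map_sum]
  conv_rhs => rw [← sum_smul_counit (ℛ ℂ a), map_sum]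
  refine Finset.sum_congr rfl fun i _ => ?_
  simp [smul_eq_mul, mul_comm]

end ModularElementAux

open ModularElementAux Coalgebra HopfAlgebra in
theorem exists_modular_element
    {A : Type*} [Ring A] [HopfAlgebra ℂ A] [FiniteDimensional ℂ A]
    (φ : A →ₗ[ℂ] ℂ) (hφ : IsLeftIntegral φ) :
    ∃ δ : A, IsUnit δ ∧
      Coalgebra.comul (R := ℂ) δ = δ ⊗ₜ[ℂ] δ ∧
      Coalgebra.counit (R := ℂ) δ = 1 ∧
      ∀ a : A, TensorProduct.lid ℂ A (φ.rTensor A (Coalgebra.comul (R := ℂ) a)) = φ a • δ := by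
  obtain ⟨hφ0, hint'⟩ := hφ
  have hint : ∀ a : A, muR φ (Coalgebra.comul (R := ℂ) a) = φ a • 1 := fun a => by
    simpa [muR] using hint' a
  obtain ⟨x0, hx0⟩ : ∃ x, φ x ≠ 0 := by
    by_contra hc
    push_neg at hc
    exact hφ0 (LinearMap.ext fun x => hc x)
  set u : A := (φ x0)⁻¹ • x0 with hu
  have hφu : φ u = 1 := by rw [hu, map_smul, smul_eq_mul, inv_mul_cancel₀ hx0]
  have hker : ∀ a : A, φ a = 0 → Tmap φ a = 0 := by
    intro a ha
    rw [← Module.forall_dual_apply_eq_zero_iff ℂ]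
    intro f
    obtain ⟨c, hc⟩ := unique_integral φ hφ0 hint (f ∘ₗ Tmap φ) (Tf_integral φ hint f)
    have h1 := hc a
    rw [LinearMap.comp_apply] at h1
    rw [h1, ha, mul_zero]
  set δ : A := Tmap φ u with hδdef
  have hT : ∀ a : A, Tmap φ a = φ a • δ := by
    intro a
    have h0 : φ (a - φ a • u) = 0 := by
      rw [map_sub, map_smul, smul_eq_mul, hφu, mul_one, sub_self]
    have h1 := hker _ h0
    rw [map_sub, map_smul, sub_eq_zero] at h1
    exact h1
  have hcomul : Coalgebra.comul (R := ℂ) δ = δ ⊗ₜ[ℂ] δ := by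
    have h2 := comul_Tmap φ δ hT u
    rwa [← hδdef] at h2
  have hcounit : Coalgebra.counit (R := ℂ) δ = 1 := by
    rw [hδdef, counit_Tmap φ u, hφu]
  have h1 : antipode (R := ℂ) δ * δ = 1 := by
    have h3 := mul_antipode_rTensor_comul_apply (R := ℂ) δ
    rw [hcomul] at h3
    simpa [hcounit] using h3
  have h2 : δ * antipode (R := ℂ) δ = 1 := by
    have h3 := mul_antipode_lTensor_comul_apply (R := ℂ) δ
    rw [hcomul] at h3
    simpa [hcounit] using h3
  refine ⟨δ, ⟨⟨δ, antipode (R := ℂ) δ, h2, h1⟩, rfl⟩, hcomul, hcounit, fun a => ?_⟩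
  have h4 : TensorProduct.lid ℂ A (φ.rTensor A (Coalgebra.comul (R := ℂ) a)) = Tmap φ a := rfl
  rw [h4, hT a]
end

section
/- Let A be a Hopf algebra over ℂ with bijective antipode S, and let φ be a left integral on A. Then there exists a nonzero scalar ν ∈ ℂ such that φ(S(S(a))) = ν·φ(a) for all a ∈ A. -/
/-!
STATEMENT 8: Let A be a Hopf algebra over ℂ with bijective antipode S, and let φ be a
left integral on A.  Then there exists a nonzero scalar ν ∈ ℂ such that
φ(S(S(a))) = ν·φ(a) for all a ∈ A.
-/

open scoped TensorProduct

namespace LeftIntegralProof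

open Coalgebra HopfAlgebra LinearMap TensorProduct

universe uA

variable {A : Type uA} [Semiring A] [HopfAlgebra ℂ A]

/-- Contraction on the right leg: `x ⊗ y ↦ χ(y) • x`. -/
noncomputable def CR (χ : A →ₗ[ℂ] ℂ) : A ⊗[ℂ] A →ₗ[ℂ] A :=
  TensorProduct.lift (((LinearMap.lsmul ℂ A).comp χ).flip)

@[simp] lemma CR_tmul (χ : A →ₗ[ℂ] ℂ) (x y : A) : CR χ (x ⊗ₜ[ℂ] y) = χ y • x := rfl

/-- Contraction on the left leg: `x ⊗ y ↦ χ(x) • y`. -/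
noncomputable def CL (χ : A →ₗ[ℂ] ℂ) : A ⊗[ℂ] A →ₗ[ℂ] A :=
  TensorProduct.lift ((LinearMap.lsmul ℂ A).comp χ)

@[simp] lemma CL_tmul (χ : A →ₗ[ℂ] ℂ) (x y : A) : CL χ (x ⊗ₜ[ℂ] y) = χ x • y := rfl

/-- `χ` is left invariant: `(id ⊗ χ)(Δ a) = χ(a) 1`. -/
def LeftInv (χ : A →ₗ[ℂ] ℂ) : Prop := ∀ a : A, CR χ (comul (R := ℂ) a) = χ a • 1

lemma isLeftIntegral_leftInv {φ : A →ₗ[ℂ] ℂ} (hφ : IsLeftIntegral φ) : LeftInv φ := by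
  intro a
  rw [← hφ.2 a]
  have : ∀ t : A ⊗[ℂ] A, TensorProduct.rid ℂ A (φ.lTensor A t) = CR φ t := by
    intro t
    induction t with
    | zero => simp
    | tmul x y => simp
    | add x y hx hy => simp [map_add, hx, hy]
  exact (this _).symm

lemma CR_repr (χ : A →ₗ[ℂ] ℂ) {a : A} {ι : Type*} (r : Repr ℂ a ι) :
    CR χ (comul (R := ℂ) a) = ∑ i ∈ r.index, χ (r.right i) • r.left i := by
  rw [← r.eq, map_sum]; simp

lemma CL_repr (χ : A →ₗ[ℂ] ℂ) {a : A} {ι : Type*} (r : Repr ℂ a ι) :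
    CL χ (comul (R := ℂ) a) = ∑ i ∈ r.index, χ (r.left i) • r.right i := by
  rw [← r.eq, map_sum]; simp

lemma LeftInv.sum {χ : A →ₗ[ℂ] ℂ} (h : LeftInv χ) {a : A} {ι : Type*} (r : Repr ℂ a ι) :
    ∑ i ∈ r.index, χ (r.right i) • r.left i = χ a • 1 := by
  rw [← CR_repr]; exact h a

/-- counit collapse: `∑ ε(a₁) • a₂ = a`. -/
lemma sum_counit_left {a : A} {ι : Type*} (r : Repr ℂ a ι) :
    ∑ i ∈ r.index, counit (R := ℂ) (r.left i) • r.right i = a := by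
  have h := Coalgebra.sum_counit_tmul_eq (R := ℂ) r
  have h2 := congrArg (TensorProduct.lid ℂ A) h
  simp only [map_sum, TensorProduct.lid_tmul, one_smul] at h2
  exact h2

/-- counit collapse: `∑ ε(a₂) • a₁ = a`. -/
lemma sum_counit_right {a : A} {ι : Type*} (r : Repr ℂ a ι) :
    ∑ i ∈ r.index, counit (R := ℂ) (r.right i) • r.left i = a := by
  have h := Coalgebra.sum_tmul_counit_eq (R := ℂ) r
  have h2 := congrArg (TensorProduct.rid ℂ A) h
  simp only [map_sum, TensorProduct.rid_tmul, one_smul] at h2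
  exact h2

/-- a `Repr` for a product, from `Repr`s of the factors -/
noncomputable def reprMul {a b : A} {ι κ : Type*} (ra : Repr ℂ a ι) (rb : Repr ℂ b κ) :
    Repr ℂ (a * b) (ι × κ) where
  index := ra.index ×ˢ rb.index
  left := fun p => ra.left p.1 * rb.left p.2
  right := fun p => ra.right p.1 * rb.right p.2
  eq := by
    rw [Bialgebra.comul_mul, ← ra.eq, ← rb.eq, Finset.sum_mul_sum, Finset.sum_product]
    simp [Algebra.TensorProduct.tmul_mul_tmul]


/-! ### Convolution algebra -/

section Conv

variable {B : Type*} [Semiring B] [Algebra ℂ B]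

/-- Convolution product of linear maps `A →ₗ B`. -/
noncomputable def conv (f g : A →ₗ[ℂ] B) : A →ₗ[ℂ] B :=
  (LinearMap.mul' ℂ B) ∘ₗ (TensorProduct.map f g) ∘ₗ comul

/-- Convolution unit. -/
noncomputable def convUnit : A →ₗ[ℂ] B := (Algebra.linearMap ℂ B) ∘ₗ counit

lemma conv_repr (f g : A →ₗ[ℂ] B) {a : A} {ι : Type*} (r : Repr ℂ a ι) :
    conv f g a = ∑ i ∈ r.index, f (r.left i) * g (r.right i) := by
  simp only [conv, comp_apply]
  rw [← r.eq, map_sum, map_sum]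
  simp

lemma convUnit_apply (a : A) :
    (convUnit (B := B)) a = counit (R := ℂ) a • 1 := by
  simp [convUnit, Algebra.algebraMap_eq_smul_one]

lemma conv_unit_right (f : A →ₗ[ℂ] B) : conv f convUnit = f := by
  ext a
  rw [conv_repr f convUnit (ℛ ℂ a)]
  have : ∀ i ∈ (ℛ ℂ a).index, f ((ℛ ℂ a).left i) * convUnit ((ℛ ℂ a).right i)
      = counit (R := ℂ) ((ℛ ℂ a).right i) • f ((ℛ ℂ a).left i) := by
    intro i _
    rw [convUnit_apply, mul_smul_comm, mul_one]
  rw [Finset.sum_congr rfl this]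
  have h3 := congrArg f (sum_counit_right (ℛ ℂ a))
  rw [map_sum] at h3
  simpa [map_smul] using h3

lemma conv_unit_left (f : A →ₗ[ℂ] B) : conv convUnit f = f := by
  ext a
  rw [conv_repr convUnit f (ℛ ℂ a)]
  have : ∀ i ∈ (ℛ ℂ a).index, convUnit ((ℛ ℂ a).left i) * f ((ℛ ℂ a).right i)
      = counit (R := ℂ) ((ℛ ℂ a).left i) • f ((ℛ ℂ a).right i) := by
    intro i _
    rw [convUnit_apply, smul_mul_assoc, one_mul]
  rw [Finset.sum_congr rfl this]
  have h3 := congrArg f (sum_counit_left (ℛ ℂ a))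
  rw [map_sum] at h3
  simpa [map_smul] using h3

lemma conv_assoc (f g h : A →ₗ[ℂ] B) : conv (conv f g) h = conv f (conv g h) := by
  ext a
  set r := ℛ ℂ a with hr
  set r1 : (i : r.ι) → Repr ℂ (r.left i) (A × A) := fun i => ℛ ℂ (r.left i) with hr1
  set r2 : (i : r.ι) → Repr ℂ (r.right i) (A × A) := fun i => ℛ ℂ (r.right i) with hr2
  have key := Coalgebra.sum_map_tmul_tmul_eq (R := ℂ) f g h a (repr := r) (a₁ := r1) (a₂ := r2)
  have := congrArg ((LinearMap.mul' ℂ B) ∘ₗ (LinearMap.mul' ℂ B).lTensor B) key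
  simp only [map_sum, comp_apply, lTensor_tmul, LinearMap.mul'_apply] at this
  calc (conv (conv f g) h) a
      = ∑ i ∈ r.index, (conv f g) (r.left i) * h (r.right i) := conv_repr _ _ r
    _ = ∑ i ∈ r.index, ∑ j ∈ (r1 i).index,
          f ((r1 i).left j) * (g ((r1 i).right j) * h (r.right i)) := by
        refine Finset.sum_congr rfl fun i _ => ?_
        rw [conv_repr f g (r1 i), Finset.sum_mul]
        exact Finset.sum_congr rfl fun j _ => mul_assoc _ _ _
    _ = ∑ i ∈ r.index, ∑ j ∈ (r2 i).index,
          f (r.left i) * (g ((r2 i).left j) * h ((r2 i).right j)) := this.symm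
    _ = (conv f (conv g h)) a := by
        rw [conv_repr f (conv g h) r]
        refine Finset.sum_congr rfl fun i _ => ?_
        rw [conv_repr g h (r2 i), Finset.mul_sum]

lemma conv_eq_of_inv {f g m : A →ₗ[ℂ] B} (hfm : conv f m = convUnit)
    (hmg : conv m g = convUnit) : f = g := by
  have : conv f (conv m g) = conv (conv f m) g := (conv_assoc f m g).symm
  rw [hmg, hfm, conv_unit_right, conv_unit_left] at this
  exact this

end Conv


/-! ### Basic antipode facts -/

/-- the trivial representation of `comul 1` -/
noncomputable def reprOne : Repr ℂ (1 : A) Unit where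
  index := {Unit.unit}
  left := fun _ => 1
  right := fun _ => 1
  eq := by simp [Bialgebra.comul_one, Algebra.TensorProduct.one_def]

lemma antipode_one : antipode (R := ℂ) (1 : A) = 1 := by
  have h := HopfAlgebra.sum_antipode_mul_eq_algebraMap_counit (R := ℂ) (reprOne (A := A))
  simpa [reprOne] using h

lemma counit_antipode (a : A) :
    counit (R := ℂ) (antipode (R := ℂ) a) = counit (R := ℂ) a := by
  have h := HopfAlgebra.sum_antipode_mul_eq_algebraMap_counit (R := ℂ) (ℛ ℂ a)
  have h2 := congrArg (counit (R := ℂ)) h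
  simp only [map_sum, Bialgebra.counit_mul, Bialgebra.counit_algebraMap] at h2
  calc counit (R := ℂ) (antipode (R := ℂ) a)
      = counit (R := ℂ) (antipode (R := ℂ) (∑ i ∈ (ℛ ℂ a).index,
          counit (R := ℂ) ((ℛ ℂ a).right i) • (ℛ ℂ a).left i)) := by
        rw [sum_counit_right]
    _ = ∑ i ∈ (ℛ ℂ a).index,
          counit (R := ℂ) (antipode (R := ℂ) ((ℛ ℂ a).left i)) *
            counit (R := ℂ) ((ℛ ℂ a).right i) := by
        rw [map_sum, map_sum]
        refine Finset.sum_congr rfl fun i _ => ?_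
        rw [map_smul, map_smul, smul_eq_mul, mul_comm]
    _ = counit (R := ℂ) a := h2

/-- The "flipped" antipode-comultiplication map `τ ∘ (S ⊗ S) ∘ Δ`. -/
noncomputable def g2 : A →ₗ[ℂ] A ⊗[ℂ] A :=
  (TensorProduct.comm ℂ A A).toLinearMap ∘ₗ
    (TensorProduct.map (antipode (R := ℂ)) (antipode (R := ℂ))) ∘ₗ comul

lemma g2_repr {x : A} {ι : Type*} (r : Repr ℂ x ι) :
    g2 x = ∑ m ∈ r.index,
      antipode (R := ℂ) (r.right m) ⊗ₜ[ℂ] antipode (R := ℂ) (r.left m) := by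
  simp only [g2, comp_apply]
  rw [← r.eq, map_sum, map_sum]
  simp

lemma claim1 : conv (comul (R := ℂ) (A := A)) (comul (R := ℂ) ∘ₗ antipode (R := ℂ))
    = convUnit := by
  ext a
  rw [conv_repr _ _ (ℛ ℂ a), convUnit_apply]
  have : ∀ i ∈ (ℛ ℂ a).index,
      comul (R := ℂ) ((ℛ ℂ a).left i) *
        (comul (R := ℂ) ∘ₗ antipode (R := ℂ)) ((ℛ ℂ a).right i)
      = comul (R := ℂ) ((ℛ ℂ a).left i * antipode (R := ℂ) ((ℛ ℂ a).right i)) := by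
    intro i _
    rw [Bialgebra.comul_mul]; rfl
  rw [Finset.sum_congr rfl this, ← map_sum,
    HopfAlgebra.sum_mul_antipode_eq_smul (ℛ ℂ a), map_smul, Bialgebra.comul_one]

lemma lambda_lemma (u X : A) {ι : Type*} (ru : Repr ℂ u ι) :
    ∑ j ∈ ru.index, g2 (ru.left j) * (ru.right j ⊗ₜ[ℂ] X)
      = 1 ⊗ₜ[ℂ] (antipode (R := ℂ) u * X) := by
  classical
  set r1 : (i : ru.ι) → Repr ℂ (ru.left i) (A × A) := fun i => ℛ ℂ (ru.left i) with hr1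
  set r2 : (i : ru.ι) → Repr ℂ (ru.right i) (A × A) := fun i => ℛ ℂ (ru.right i) with hr2
  have key := Coalgebra.sum_tmul_tmul_eq (R := ℂ) ru r1 r2
  set Θ : A ⊗[ℂ] (A ⊗[ℂ] A) →ₗ[ℂ] A ⊗[ℂ] A :=
    (TensorProduct.comm ℂ A A).toLinearMap ∘ₗ
      TensorProduct.map
        ((LinearMap.mulRight ℂ X) ∘ₗ antipode (R := ℂ))
        ((LinearMap.mul' ℂ A) ∘ₗ (antipode (R := ℂ)).rTensor A) with hΘ
  have hΘt : ∀ p q t : A, Θ (p ⊗ₜ[ℂ] (q ⊗ₜ[ℂ] t))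
      = (antipode (R := ℂ) q * t) ⊗ₜ[ℂ] (antipode (R := ℂ) p * X) := by
    intro p q t
    simp [hΘ]
  have hkey := congrArg Θ key
  simp only [map_sum, hΘt] at hkey
  calc ∑ j ∈ ru.index, g2 (ru.left j) * (ru.right j ⊗ₜ[ℂ] X)
      = ∑ j ∈ ru.index, ∑ m ∈ (r1 j).index,
          (antipode (R := ℂ) ((r1 j).right m) * ru.right j) ⊗ₜ[ℂ]
            (antipode (R := ℂ) ((r1 j).left m) * X) := by
        refine Finset.sum_congr rfl fun j _ => ?_
        rw [g2_repr (r1 j), Finset.sum_mul]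
        exact Finset.sum_congr rfl fun m _ => by
          rw [Algebra.TensorProduct.tmul_mul_tmul]
    _ = ∑ j ∈ ru.index, ∑ m ∈ (r2 j).index,
          (antipode (R := ℂ) ((r2 j).left m) * (r2 j).right m) ⊗ₜ[ℂ]
            (antipode (R := ℂ) (ru.left j) * X) := hkey
    _ = ∑ j ∈ ru.index, counit (R := ℂ) (ru.right j) •
          ((1 : A) ⊗ₜ[ℂ] (antipode (R := ℂ) (ru.left j) * X)) := by
        refine Finset.sum_congr rfl fun j _ => ?_
        rw [← TensorProduct.sum_tmul, HopfAlgebra.sum_antipode_mul_eq_smul (r2 j),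
          TensorProduct.smul_tmul']
    _ = 1 ⊗ₜ[ℂ] (antipode (R := ℂ) u * X) := by
        have hstep : ∀ j ∈ ru.index, counit (R := ℂ) (ru.right j) •
              ((1 : A) ⊗ₜ[ℂ] (antipode (R := ℂ) (ru.left j) * X))
            = (1 : A) ⊗ₜ[ℂ]
                (counit (R := ℂ) (ru.right j) • (antipode (R := ℂ) (ru.left j) * X)) :=
          fun j _ => (TensorProduct.tmul_smul _ _ _).symm
        rw [Finset.sum_congr rfl hstep, ← TensorProduct.tmul_sum]
        congr 1
        have h3 := congrArg (fun z => antipode (R := ℂ) z * X) (sum_counit_right ru)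
        rw [← h3, map_sum, Finset.sum_mul]
        exact Finset.sum_congr rfl fun j _ => by rw [map_smul, smul_mul_assoc]

lemma claim2 : conv (g2 (A := A)) (comul (R := ℂ)) = convUnit := by
  ext a
  rw [conv_repr _ _ (ℛ ℂ a), convUnit_apply]
  set r := ℛ ℂ a with hrdef
  set r1 : (i : r.ι) → Repr ℂ (r.left i) (A × A) := fun i => ℛ ℂ (r.left i) with hr1
  set r2 : (i : r.ι) → Repr ℂ (r.right i) (A × A) := fun i => ℛ ℂ (r.right i) with hr2
  have key := Coalgebra.sum_tmul_tmul_eq (R := ℂ) r r1 r2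
  set Ψ : A ⊗[ℂ] (A ⊗[ℂ] A) →ₗ[ℂ] A ⊗[ℂ] A :=
    (LinearMap.mul' ℂ (A ⊗[ℂ] A)) ∘ₗ TensorProduct.map g2 LinearMap.id with hΨ
  have hΨt : ∀ (p : A) (w : A ⊗[ℂ] A), Ψ (p ⊗ₜ[ℂ] w) = g2 p * w := by
    intro p w; simp [hΨ]
  have hkey := congrArg Ψ key
  simp only [map_sum, hΨt] at hkey
  calc ∑ i ∈ r.index, g2 (r.left i) * comul (R := ℂ) (r.right i)
      = ∑ i ∈ r.index, ∑ k ∈ (r2 i).index,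
          g2 (r.left i) * ((r2 i).left k ⊗ₜ[ℂ] (r2 i).right k) := by
        refine Finset.sum_congr rfl fun i _ => ?_
        rw [← (r2 i).eq, Finset.mul_sum]
    _ = ∑ i ∈ r.index, ∑ j ∈ (r1 i).index,
          g2 ((r1 i).left j) * ((r1 i).right j ⊗ₜ[ℂ] r.right i) := hkey.symm
    _ = ∑ i ∈ r.index, (1 : A) ⊗ₜ[ℂ] (antipode (R := ℂ) (r.left i) * r.right i) := by
        exact Finset.sum_congr rfl fun i _ => lambda_lemma (r.left i) (r.right i) (r1 i)
    _ = counit (R := ℂ) a • 1 := by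
        rw [← TensorProduct.tmul_sum, HopfAlgebra.sum_antipode_mul_eq_smul r,
          TensorProduct.tmul_smul]
        rw [Algebra.TensorProduct.one_def]

/-- The hard classical fact: `Δ ∘ S = τ ∘ (S ⊗ S) ∘ Δ`, proved by uniqueness of convolution
inverses in `Hom(A, A ⊗ A)`. -/
lemma comul_antipode :
    (comul (R := ℂ) (A := A)) ∘ₗ antipode (R := ℂ) = g2 :=
  (conv_eq_of_inv claim2 claim1).symm

lemma comul_antipode_apply {a : A} {ι : Type*} (r : Repr ℂ a ι) :
    comul (R := ℂ) (antipode (R := ℂ) a) = ∑ m ∈ r.index,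
      antipode (R := ℂ) (r.right m) ⊗ₜ[ℂ] antipode (R := ℂ) (r.left m) := by
  have := congrArg (fun f : A →ₗ[ℂ] A ⊗[ℂ] A => f a) comul_antipode
  simp only [comp_apply] at this
  rw [this, g2_repr r]



/-! ### The inverse antipode -/

section Sinv

variable (hS : Function.Bijective (antipode (R := ℂ) (A := A)))

/-- The inverse of the antipode. -/
noncomputable def Sinv : A →ₗ[ℂ] A :=
  (LinearEquiv.ofBijective (antipode (R := ℂ)) hS).symm.toLinearMap

lemma Sinv_antipode (x : A) : Sinv hS (antipode (R := ℂ) x) = x :=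
  (LinearEquiv.ofBijective (antipode (R := ℂ)) hS).symm_apply_apply x

lemma antipode_Sinv (y : A) : antipode (R := ℂ) (Sinv hS y) = y :=
  (LinearEquiv.ofBijective (antipode (R := ℂ)) hS).apply_symm_apply y

lemma Sinv_one : Sinv hS (1 : A) = 1 := by
  have := congrArg (Sinv hS) (antipode_one (A := A))
  rw [Sinv_antipode] at this
  exact this.symm

lemma comul_Sinv {c : A} {ι : Type*} (r : Repr ℂ c ι) :
    comul (R := ℂ) (Sinv hS c) =
      ∑ i ∈ r.index, Sinv hS (r.right i) ⊗ₜ[ℂ] Sinv hS (r.left i) := by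
  set eS := LinearEquiv.ofBijective (antipode (R := ℂ) (A := A)) hS with heS
  set E := (TensorProduct.congr eS eS).trans (TensorProduct.comm ℂ A A) with hE
  apply E.injective
  have hEt : ∀ t : A ⊗[ℂ] A, E t = (TensorProduct.comm ℂ A A)
      (TensorProduct.map (antipode (R := ℂ)) (antipode (R := ℂ)) t) := by
    intro t
    induction t with
    | zero => simp
    | tmul x y => simp [hE, heS]
    | add x y hx hy => simp only [map_add, hx, hy]
  rw [hEt]
  have h1 : (TensorProduct.comm ℂ A A)
      (TensorProduct.map (antipode (R := ℂ)) (antipode (R := ℂ))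
        (comul (R := ℂ) (Sinv hS c))) = g2 (Sinv hS c) := by
    simp [g2]
  rw [h1]
  have h2 : g2 (Sinv hS c) = comul (R := ℂ) (antipode (R := ℂ) (Sinv hS c)) := by
    have := congrArg (fun f : A →ₗ[ℂ] A ⊗[ℂ] A => f (Sinv hS c)) comul_antipode
    simpa using this.symm
  rw [h2, antipode_Sinv]
  rw [map_sum]
  have h3 : ∀ i ∈ r.index, E (Sinv hS (r.right i) ⊗ₜ[ℂ] Sinv hS (r.left i))
      = r.left i ⊗ₜ[ℂ] r.right i := by
    intro i _
    simp only [hE, LinearEquiv.trans_apply, TensorProduct.congr_tmul, TensorProduct.comm_tmul]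
    rw [heS]
    simp only [LinearEquiv.ofBijective_apply, antipode_Sinv]
  rw [Finset.sum_congr rfl h3, r.eq]

/-- Representation of `comul (Sinv c)` from a representation of `c`. -/
noncomputable def reprSinv {c : A} {ι : Type*} (r : Repr ℂ c ι) : Repr ℂ (Sinv hS c) ι where
  index := r.index
  left := fun i => Sinv hS (r.right i)
  right := fun i => Sinv hS (r.left i)
  eq := (comul_Sinv hS r).symm

/-- Representation of `comul (antipode a)` from a representation of `a`. -/
noncomputable def reprAntipode {a : A} {ι : Type*} (r : Repr ℂ a ι) :
    Repr ℂ (HopfAlgebra.antipode (R := ℂ) a) ι where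
  index := r.index
  left := fun i => HopfAlgebra.antipode (R := ℂ) (r.right i)
  right := fun i => HopfAlgebra.antipode (R := ℂ) (r.left i)
  eq := (comul_antipode_apply r).symm

include hS in
/-- `φ ∘ S²` is left invariant. -/
lemma leftInv_SS {φ : A →ₗ[ℂ] ℂ} (hφ : LeftInv φ) :
    LeftInv (φ ∘ₗ antipode (R := ℂ) ∘ₗ antipode (R := ℂ) (A := A)) := by
  intro a
  set r := ℛ ℂ a with hr
  rw [CR_repr _ r]
  have h1 := hφ.sum (reprAntipode (reprAntipode r))
  have h2 : ∀ i ∈ r.index,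
      φ (antipode (R := ℂ) (antipode (R := ℂ) (r.right i))) •
        antipode (R := ℂ) (antipode (R := ℂ) (r.left i))
      = φ ((reprAntipode (reprAntipode r)).right i) •
          (reprAntipode (reprAntipode r)).left i := fun i _ => rfl
  have h1' : ∑ i ∈ r.index,
      φ (antipode (R := ℂ) (antipode (R := ℂ) (r.right i))) •
        antipode (R := ℂ) (antipode (R := ℂ) (r.left i))
      = φ (antipode (R := ℂ) (antipode (R := ℂ) a)) • 1 := by
    rw [Finset.sum_congr rfl h2]
    exact h1
  have h3 := congrArg (fun z => Sinv hS (Sinv hS z)) h1'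
  simp only [map_sum, map_smul, Sinv_antipode] at h3
  simpa [Sinv_one hS, comp_apply] using h3

/-- If `χ` is left invariant then `χ ∘ S⁻¹` is right invariant. -/
lemma rightInv_Sinv {χ : A →ₗ[ℂ] ℂ} (hχ : LeftInv χ) {b : A} {ι : Type*} (r : Repr ℂ b ι) :
    ∑ i ∈ r.index, χ (Sinv hS (r.left i)) • r.right i = χ (Sinv hS b) • 1 := by
  have h1 := hχ.sum (reprSinv hS r)
  have h3 := congrArg (antipode (R := ℂ)) h1
  simp only [map_sum, map_smul, antipode_Sinv, reprSinv] at h3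
  simpa [antipode_one] using h3

end Sinv

/-! ### Lemma A -/

lemma CA1 {a : A} {ι κ : Type*} (ra : Repr ℂ a ι) (r2 : (i : ι) → Repr ℂ (ra.right i) κ) :
    ∑ i ∈ ra.index, ∑ k ∈ (r2 i).index,
      (antipode (R := ℂ) (ra.left i) * (r2 i).left k) ⊗ₜ[ℂ] (r2 i).right k
      = (1 : A) ⊗ₜ[ℂ] a := by
  classical
  set r1 : (i : ra.ι) → Repr ℂ (ra.left i) (A × A) := fun i => ℛ ℂ (ra.left i) with hr1
  have key := Coalgebra.sum_tmul_tmul_eq (R := ℂ) ra r1 r2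
  set W : A ⊗[ℂ] (A ⊗[ℂ] A) →ₗ[ℂ] A ⊗[ℂ] A :=
    (LinearMap.rTensor A ((LinearMap.mul' ℂ A) ∘ₗ (antipode (R := ℂ)).rTensor A)) ∘ₗ
      (TensorProduct.assoc ℂ A A A).symm.toLinearMap with hW
  have hWt : ∀ p q t : A, W (p ⊗ₜ[ℂ] (q ⊗ₜ[ℂ] t))
      = (antipode (R := ℂ) p * q) ⊗ₜ[ℂ] t := by
    intro p q t; simp [hW]
  have hkey := congrArg W key
  simp only [map_sum, hWt] at hkey
  calc ∑ i ∈ ra.index, ∑ k ∈ (r2 i).index,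
        (antipode (R := ℂ) (ra.left i) * (r2 i).left k) ⊗ₜ[ℂ] (r2 i).right k
      = ∑ i ∈ ra.index, ∑ j ∈ (r1 i).index,
        (antipode (R := ℂ) ((r1 i).left j) * (r1 i).right j) ⊗ₜ[ℂ] ra.right i := hkey.symm
    _ = ∑ i ∈ ra.index, counit (R := ℂ) (ra.left i) • ((1 : A) ⊗ₜ[ℂ] ra.right i) := by
        refine Finset.sum_congr rfl fun i _ => ?_
        rw [← TensorProduct.sum_tmul, HopfAlgebra.sum_antipode_mul_eq_smul (r1 i),
          TensorProduct.smul_tmul']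
    _ = (1 : A) ⊗ₜ[ℂ] a := by
        have hstep : ∀ i ∈ ra.index, counit (R := ℂ) (ra.left i) •
              ((1 : A) ⊗ₜ[ℂ] ra.right i)
            = (1 : A) ⊗ₜ[ℂ] (counit (R := ℂ) (ra.left i) • ra.right i) :=
          fun i _ => (TensorProduct.tmul_smul _ _ _).symm
        rw [Finset.sum_congr rfl hstep, ← TensorProduct.tmul_sum, sum_counit_left]

/-- Lemma A: `∑ χ(a b₂) b₁ = ∑ χ(a₂ b) S(a₁)` for a left-invariant `χ`. -/
lemma lemA {χ : A →ₗ[ℂ] ℂ} (hχ : LeftInv χ) (a b : A) {ι κ : Type*} (ra : Repr ℂ a ι) (rb : Repr ℂ b κ) :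
    ∑ j ∈ rb.index, χ (a * rb.right j) • rb.left j
      = ∑ i ∈ ra.index, χ (ra.right i * b) • antipode (R := ℂ) (ra.left i) := by
  classical
  set r2 : (i : ra.ι) → Repr ℂ (ra.right i) (A × A) := fun i => ℛ ℂ (ra.right i) with hr2
  have step1 : ∀ i ∈ ra.index, χ (ra.right i * b) • antipode (R := ℂ) (ra.left i)
      = ∑ k ∈ (r2 i).index, ∑ j ∈ rb.index,
          χ ((r2 i).right k * rb.right j) •
            (antipode (R := ℂ) (ra.left i) * ((r2 i).left k * rb.left j)) := by
    intro i _
    have h0 := hχ.sum (reprMul (r2 i) rb)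
    have : antipode (R := ℂ) (ra.left i) * (χ (ra.right i * b) • (1 : A))
        = χ (ra.right i * b) • antipode (R := ℂ) (ra.left i) := by
      rw [mul_smul_comm, mul_one]
    rw [← this, ← h0]
    rw [Finset.mul_sum]
    rw [reprMul, Finset.sum_product]
    simp only [mul_smul_comm]
  rw [Finset.sum_congr rfl step1]
  have hG : ∀ j ∈ rb.index, χ (a * rb.right j) • rb.left j
      = ∑ i ∈ ra.index, ∑ k ∈ (r2 i).index,
          χ ((r2 i).right k * rb.right j) •
            ((antipode (R := ℂ) (ra.left i) * (r2 i).left k) * rb.left j) := by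
    intro j _
    set Γ : A ⊗[ℂ] A →ₗ[ℂ] A :=
      (CR (χ ∘ₗ LinearMap.mulRight ℂ (rb.right j))) ∘ₗ
        (LinearMap.mulRight ℂ (rb.left j)).rTensor A with hΓ
    have hΓt : ∀ x y : A, Γ (x ⊗ₜ[ℂ] y) = χ (y * rb.right j) • (x * rb.left j) := by
      intro x y; simp [hΓ]
    have h := congrArg Γ (CA1 ra r2)
    simp only [map_sum, hΓt] at h
    simpa only [one_mul] using h.symm
  calc ∑ j ∈ rb.index, χ (a * rb.right j) • rb.left j
      = ∑ j ∈ rb.index, ∑ i ∈ ra.index, ∑ k ∈ (r2 i).index,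
          χ ((r2 i).right k * rb.right j) •
            ((antipode (R := ℂ) (ra.left i) * (r2 i).left k) * rb.left j) :=
        Finset.sum_congr rfl hG
    _ = ∑ i ∈ ra.index, ∑ j ∈ rb.index, ∑ k ∈ (r2 i).index,
          χ ((r2 i).right k * rb.right j) •
            ((antipode (R := ℂ) (ra.left i) * (r2 i).left k) * rb.left j) :=
        Finset.sum_comm
    _ = ∑ i ∈ ra.index, ∑ k ∈ (r2 i).index, ∑ j ∈ rb.index,
          χ ((r2 i).right k * rb.right j) •
            (antipode (R := ℂ) (ra.left i) * ((r2 i).left k * rb.left j)) := by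
        refine Finset.sum_congr rfl fun i _ => ?_
        rw [Finset.sum_comm]
        exact Finset.sum_congr rfl fun k _ => Finset.sum_congr rfl fun j _ => by
          rw [mul_assoc]

/-- The key identity: `∑ χ(a₁) χ'(a₂ b) = χ(S⁻¹ b) χ'(a)` for left-invariant `χ, χ'`. -/
lemma keyL (hS : Function.Bijective (antipode (R := ℂ) (A := A)))
    {χ χ' : A →ₗ[ℂ] ℂ} (hχ : LeftInv χ) (hχ' : LeftInv χ') (a b : A) {ι : Type*} (ra : Repr ℂ a ι) :
    ∑ i ∈ ra.index, χ (ra.left i) * χ' (ra.right i * b)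
      = χ (Sinv hS b) * χ' a := by
  classical
  set rb := ℛ ℂ b with hrb
  have hA := lemA hχ' a b ra rb
  have h := congrArg (χ ∘ₗ Sinv hS) hA
  simp only [map_sum, map_smul, comp_apply, Sinv_antipode, smul_eq_mul] at h
  calc ∑ i ∈ ra.index, χ (ra.left i) * χ' (ra.right i * b)
      = ∑ i ∈ ra.index, χ' (ra.right i * b) * χ (ra.left i) := by
        exact Finset.sum_congr rfl fun i _ => mul_comm _ _
    _ = ∑ j ∈ rb.index, χ' (a * rb.right j) * χ (Sinv hS (rb.left j)) := h.symm
    _ = χ' (a * (∑ j ∈ rb.index, χ (Sinv hS (rb.left j)) • rb.right j)) := by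
        rw [Finset.mul_sum, map_sum]
        exact Finset.sum_congr rfl fun j _ => by
          rw [mul_smul_comm, map_smul, smul_eq_mul, mul_comm]
    _ = χ (Sinv hS b) * χ' a := by
        rw [rightInv_Sinv hS hχ rb]
        rw [mul_smul_comm, mul_one, map_smul, smul_eq_mul]

/-! ### Faithfulness of the integral -/

section Faithful

variable (hS : Function.Bijective (antipode (R := ℂ) (A := A)))

lemma counit_Sinv (d : A) : counit (R := ℂ) (Sinv hS d) = counit (R := ℂ) d := by
  have h := counit_antipode (Sinv hS d)
  rw [antipode_Sinv] at h
  exact h.symm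

/-- co-opposite antipode collapse: `∑ d₂ * S⁻¹(d₁) = ε(d) 1`. -/
lemma coop {d : A} {ι : Type*} (rd : Repr ℂ d ι) :
    ∑ k ∈ rd.index, rd.right k * Sinv hS (rd.left k) = counit (R := ℂ) d • 1 := by
  have h := HopfAlgebra.sum_antipode_mul_eq_smul (R := ℂ) (reprSinv hS rd)
  simp only [reprSinv, antipode_Sinv] at h
  rwa [counit_Sinv] at h

include hS in
/-- first step of faithfulness: for `c` in the left kernel, contraction of the comultiplication
against right translates of `φ` vanishes. -/
lemma vanish_CR {φ : A →ₗ[ℂ] ℂ} (hφ : LeftInv φ) {c : A} (hc : ∀ x, φ (c * x) = 0)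
    (b : A) {ι : Type*} (rc : Repr ℂ c ι) :
    ∑ i ∈ rc.index, φ (rc.right i * b) • rc.left i = 0 := by
  have hA := lemA hφ c b rc (ℛ ℂ b)
  have hz : ∑ j ∈ (ℛ ℂ b).index, φ (c * (ℛ ℂ b).right j) • (ℛ ℂ b).left j = 0 :=
    Finset.sum_eq_zero fun j _ => by rw [hc, zero_smul]
  rw [hz] at hA
  have h2 := congrArg (Sinv hS) hA.symm
  simp only [map_sum, map_smul, Sinv_antipode, map_zero] at h2
  exact h2

include hS in
lemma exists_good_repr {φ : A →ₗ[ℂ] ℂ} (hφ : LeftInv φ) (c : A) (hc : ∀ x, φ (c * x) = 0) :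
    ∃ (ι : Type uA) (r : Coalgebra.Repr ℂ c ι), ∀ i ∈ r.index, ∀ x : A, φ (r.right i * x) = 0 := by
  classical
  letI : AddCommGroup A := Module.addCommMonoidToAddCommGroup ℂ
  let b := Module.Basis.ofVectorSpace ℂ A
  set E : A ⊗[ℂ] A ≃ₗ[ℂ] ((Module.Basis.ofVectorSpaceIndex ℂ A) →₀ A) :=
    (TensorProduct.congr b.repr (LinearEquiv.refl ℂ A)).trans
      (TensorProduct.finsuppScalarLeft ℂ A (Module.Basis.ofVectorSpaceIndex ℂ A)) with hE
  set g : (Module.Basis.ofVectorSpaceIndex ℂ A) →₀ A := E (comul (R := ℂ) c) with hg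
  have hEt : ∀ (k : (Module.Basis.ofVectorSpaceIndex ℂ A)) (y : A),
      E ((b k : A) ⊗ₜ[ℂ] y) = Finsupp.single k y := by
    intro k y
    ext i
    simp only [hE, LinearEquiv.trans_apply, TensorProduct.congr_tmul,
      LinearEquiv.refl_apply, Module.Basis.repr_self,
      TensorProduct.finsuppScalarLeft_apply_tmul_apply]
    rw [Finsupp.single_apply, Finsupp.single_apply]
    by_cases hk : k = i
    · simp [hk]
    · simp [hk]
  have heq : ∑ k ∈ g.support, (b k : A) ⊗ₜ[ℂ] g k = comul (R := ℂ) c := by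
    apply E.injective
    rw [map_sum]
    have : ∀ k ∈ g.support, E ((b k : A) ⊗ₜ[ℂ] g k) = Finsupp.single k (g k) :=
      fun k _ => hEt k (g k)
    rw [Finset.sum_congr rfl this, ← hg]
    exact Finsupp.sum_single g
  set r0 : Coalgebra.Repr ℂ c (Module.Basis.ofVectorSpaceIndex ℂ A) :=
    Coalgebra.Repr.mk (ι := (Module.Basis.ofVectorSpaceIndex ℂ A))
      g.support (fun k => (b k : A)) (fun k => g k) heq with hr0
  refine ⟨_, r0, ?_⟩
  intro i hi x
  have hv := vanish_CR hS hφ hc x r0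
  have hli := b.linearIndependent
  rw [linearIndependent_iff'] at hli
  exact hli g.support (fun k => φ (g k * x)) hv i hi

/-- the auxiliary contraction `η_w : x ⊗ y ↦ y * (S⁻¹(x) * w)` -/
noncomputable def eta (w : A) : A ⊗[ℂ] A →ₗ[ℂ] A :=
  (LinearMap.mul' ℂ A) ∘ₗ
    (TensorProduct.map LinearMap.id ((LinearMap.mulRight ℂ w) ∘ₗ Sinv hS)) ∘ₗ
    (TensorProduct.comm ℂ A A).toLinearMap

lemma eta_tmul (w x y : A) : eta hS w (x ⊗ₜ[ℂ] y) = y * (Sinv hS x * w) := by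
  simp [eta]

/-- the functional `ζ_w(d) = ∑ φ(d₂ * (S⁻¹(d₁) * w))` -/
noncomputable def zeta (φ : A →ₗ[ℂ] ℂ) (w : A) : A →ₗ[ℂ] ℂ :=
  φ ∘ₗ eta hS w ∘ₗ comul

lemma zeta_repr (φ : A →ₗ[ℂ] ℂ) (w : A) {d : A} {ι : Type*} (rd : Repr ℂ d ι) :
    zeta hS φ w d = ∑ k ∈ rd.index, φ (rd.right k * (Sinv hS (rd.left k) * w)) := by
  simp only [zeta, comp_apply]
  rw [← rd.eq, map_sum, map_sum]
  simp only [eta_tmul]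

lemma zeta_collapse (φ : A →ₗ[ℂ] ℂ) (w d : A) :
    zeta hS φ w d = counit (R := ℂ) d * φ w := by
  rw [zeta_repr hS φ w (ℛ ℂ d)]
  have : ∀ k ∈ (ℛ ℂ d).index,
      φ ((ℛ ℂ d).right k * (Sinv hS ((ℛ ℂ d).left k) * w))
      = φ (((ℛ ℂ d).right k * Sinv hS ((ℛ ℂ d).left k)) * w) :=
    fun k _ => by rw [mul_assoc]
  rw [Finset.sum_congr rfl this, ← map_sum, ← Finset.sum_mul, coop hS (ℛ ℂ d),
    smul_mul_assoc, one_mul, map_smul, smul_eq_mul]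

lemma zeta_zero {φ : A →ₗ[ℂ] ℂ} (hφ : LeftInv φ) (w : A) {d : A}
    (hd : ∀ x, φ (d * x) = 0) : zeta hS φ w d = 0 := by
  obtain ⟨_, r, hr⟩ := exists_good_repr hS hφ d hd
  rw [zeta_repr hS φ w r]
  exact Finset.sum_eq_zero fun k hk => hr k hk _

include hS in
/-- Faithfulness: `φ(c A) = 0` implies `c = 0`. -/
lemma leftFaithful {φ : A →ₗ[ℂ] ℂ} (hφ : LeftInv φ) {w : A} (hw : φ w ≠ 0)
    (c : A) (hc : ∀ x, φ (c * x) = 0) : c = 0 := by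
  obtain ⟨_, r, hr⟩ := exists_good_repr hS hφ c hc
  have h1 : CR (zeta hS φ w) (comul (R := ℂ) c) = φ w • c := by
    rw [CR_repr _ (ℛ ℂ c)]
    have hstep : ∀ i ∈ (ℛ ℂ c).index,
        zeta hS φ w ((ℛ ℂ c).right i) • (ℛ ℂ c).left i
        = φ w • (counit (R := ℂ) ((ℛ ℂ c).right i) • (ℛ ℂ c).left i) := by
      intro i _
      rw [zeta_collapse, mul_comm, mul_smul]
    rw [Finset.sum_congr rfl hstep, ← Finset.smul_sum, sum_counit_right]
  have h2 : CR (zeta hS φ w) (comul (R := ℂ) c) = 0 := by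
    rw [CR_repr _ r]
    exact Finset.sum_eq_zero fun i hi => by
      rw [zeta_zero hS hφ w (hr i hi), zero_smul]
  rw [h2] at h1
  have := congrArg (fun z => (φ w)⁻¹ • z) h1.symm
  simpa [smul_smul, inv_mul_cancel₀ hw] using this

end Faithful

end LeftIntegralProof

open LeftIntegralProof Coalgebra in
open scoped Coalgebra in
theorem leftIntegral_antipode_sq_scaling
    {A : Type*} [Semiring A] [HopfAlgebra ℂ A]
    (hS : Function.Bijective (HopfAlgebra.antipode (R := ℂ) (A := A)))
    (φ : A →ₗ[ℂ] ℂ) (hφ : IsLeftIntegral φ) :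
    ∃ ν : ℂ, ν ≠ 0 ∧ ∀ a : A,
      φ (HopfAlgebra.antipode (R := ℂ) (A := A)
          (HopfAlgebra.antipode (R := ℂ) (A := A) a)) = ν * φ a := by
  classical
  have hne : φ ≠ 0 := hφ.1
  have hφL : LeftInv φ := isLeftIntegral_leftInv hφ
  set ψ : A →ₗ[ℂ] ℂ :=
    φ ∘ₗ HopfAlgebra.antipode (R := ℂ) ∘ₗ HopfAlgebra.antipode (R := ℂ) with hψdef
  have hψ : LeftInv ψ := leftInv_SS hS hφL
  obtain ⟨a₀, ha₀⟩ : ∃ a : A, φ a ≠ 0 := by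
    by_contra h
    push_neg at h
    exact hne (LinearMap.ext fun x => by simpa using h x)
  set Pm : A →ₗ[ℂ] A := CL ψ ∘ₗ Coalgebra.comul (R := ℂ) with hPm
  have hPkey : ∀ u b : A, φ (Pm u * b) = ψ (Sinv hS b) * φ u := by
    intro u b
    set ru := ℛ ℂ u with hru
    have h1 : Pm u = ∑ i ∈ ru.index, ψ (ru.left i) • ru.right i := CL_repr ψ ru
    rw [h1, Finset.sum_mul, map_sum]
    have h2 : ∀ i ∈ ru.index, φ ((ψ (ru.left i) • ru.right i) * b)
        = ψ (ru.left i) * φ (ru.right i * b) := fun i _ => by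
      rw [smul_mul_assoc, map_smul, smul_eq_mul]
    rw [Finset.sum_congr rfl h2]
    exact keyL hS hψ hφL u b ru
  have hPker : ∀ u : A, φ u = 0 → Pm u = 0 := by
    intro u hu
    refine leftFaithful hS hφL ha₀ _ (fun b => ?_)
    rw [hPkey u b, hu, mul_zero]
  have hεP : ∀ u : A, Coalgebra.counit (R := ℂ) (Pm u) = ψ u := by
    intro u
    set ru := ℛ ℂ u with hru
    have h1 : Pm u = ∑ i ∈ ru.index, ψ (ru.left i) • ru.right i := CL_repr ψ ru
    rw [h1, map_sum]
    have h2 : ∀ i ∈ ru.index,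
        Coalgebra.counit (R := ℂ) (ψ (ru.left i) • ru.right i)
        = ψ (Coalgebra.counit (R := ℂ) (ru.right i) • ru.left i) := fun i _ => by
      rw [map_smul, map_smul, smul_eq_mul, smul_eq_mul, mul_comm]
    rw [Finset.sum_congr rfl h2, ← map_sum, sum_counit_right]
  letI : AddCommGroup A := Module.addCommMonoidToAddCommGroup ℂ
  have hmain : ∀ a : A, φ a₀ * ψ a = φ a * ψ a₀ := by
    intro a
    have h0 : φ (φ a₀ • a - φ a • a₀) = 0 := by
      rw [map_sub, map_smul, map_smul, smul_eq_mul, smul_eq_mul, mul_comm, sub_self]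
    have h1 := hPker _ h0
    rw [map_sub, map_smul, map_smul, sub_eq_zero] at h1
    have h2 := congrArg (Coalgebra.counit (R := ℂ)) h1
    rw [map_smul, map_smul, hεP, hεP, smul_eq_mul, smul_eq_mul] at h2
    exact h2
  refine ⟨ψ a₀ / φ a₀, ?_, ?_⟩
  · intro h
    have hψ0 : ψ a₀ = 0 := by
      rcases div_eq_zero_iff.mp h with h' | h'
      · exact h'
      · exact absurd h' ha₀
    have hall : ∀ a : A, ψ a = 0 := by
      intro a
      have := hmain a
      rw [hψ0, mul_zero] at this
      exact (mul_eq_zero.mp this).resolve_left ha₀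
    apply hne
    ext x
    obtain ⟨y, hy⟩ := hS.2 x
    obtain ⟨z, hz⟩ := hS.2 y
    have hz' := hall z
    rw [hψdef] at hz'
    simp only [LinearMap.comp_apply] at hz'
    rw [hz, hy] at hz'
    simpa using hz'
  · intro a
    have h := hmain a
    have hψa : ψ a = φ (HopfAlgebra.antipode (R := ℂ)
        (HopfAlgebra.antipode (R := ℂ) a)) := by
      rw [hψdef]; rfl
    rw [← hψa, div_mul_eq_mul_div, eq_div_iff ha₀]
    calc ψ a * φ a₀ = φ a₀ * ψ a := mul_comm _ _
      _ = φ a * ψ a₀ := h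
      _ = ψ a₀ * φ a := mul_comm _ _
end

section
/- Let A be a finite-dimensional Hopf algebra over ℂ whose antipode S satisfies S∘S = id. Then the functional τ : A → ℂ defined by τ(a) = tr(π(a)), the trace of the operator of left multiplication by a on A, is both left invariant and right invariant: (id ⊗ τ)(Δ(a)) = τ(a)·1 and (τ ⊗ id)(Δ(a)) = τ(a)·1 for all a ∈ A; moreover τ ≠ 0, since τ(1) = dim A. -/
/-!
STATEMENT 17: Let A be a finite-dimensional Hopf algebra over ℂ whose antipode S
satisfies S∘S = id.  Then τ(a) = tr(π(a)), the trace of left multiplication by a, is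
both left and right invariant: (id ⊗ τ)(Δ(a)) = τ(a)·1 and (τ ⊗ id)(Δ(a)) = τ(a)·1 for
all a ∈ A; moreover τ ≠ 0, since τ(1) = dim A.
-/

open scoped TensorProduct

set_option linter.unusedSectionVars false

open scoped TensorProduct
open LinearMap TensorProduct Coalgebra HopfAlgebra

namespace HopfTraceAux

variable {A : Type*} [Ring A] [HopfAlgebra ℂ A]

local notation "𝒮" => HopfAlgebra.antipode (R := ℂ)

lemma sum_counit_right_smul_left {a : A} {ι : Type*} (r : Coalgebra.Repr ℂ a ι) :
    ∑ i ∈ r.index, Coalgebra.counit (R := ℂ) (r.right i) • r.left i = a := by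
  simpa only [map_sum, TensorProduct.rid_tmul, one_smul] using
    congrArg (TensorProduct.rid ℂ A) (Coalgebra.sum_tmul_counit_eq r)

lemma sum_counit_left_smul_right {a : A} {ι : Type*} (r : Coalgebra.Repr ℂ a ι) :
    ∑ i ∈ r.index, Coalgebra.counit (R := ℂ) (r.left i) • r.right i = a := by
  simpa only [map_sum, TensorProduct.lid_tmul, one_smul] using
    congrArg (TensorProduct.lid ℂ A) (Coalgebra.sum_counit_tmul_eq r)

lemma antipode_one' : 𝒮 (1 : A) = 1 := by
  have h := HopfAlgebra.mul_antipode_rTensor_comul_apply (R := ℂ) (1 : A)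
  simpa [Algebra.TensorProduct.one_def] using h

/-- a representation of the comultiplication of a product -/
noncomputable def reprMul {a b : A} {ι κ : Type*} (ra : Coalgebra.Repr ℂ a ι) (rb : Coalgebra.Repr ℂ b κ) :
    Coalgebra.Repr ℂ (a * b) (ι × κ) where
  index := ra.index ×ˢ rb.index
  left := fun p => ra.left p.1 * rb.left p.2
  right := fun p => ra.right p.1 * rb.right p.2
  eq := by
    rw [Finset.sum_product]
    rw [Bialgebra.comul_mul, ← ra.eq, ← rb.eq, Finset.sum_mul_sum]
    simp [Algebra.TensorProduct.tmul_mul_tmul]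

@[simp] lemma reprMul_left {a b : A} {ι κ : Type*} (ra : Coalgebra.Repr ℂ a ι) (rb : Coalgebra.Repr ℂ b κ)
    (p : ra.ι × rb.ι) : (reprMul ra rb).left p = ra.left p.1 * rb.left p.2 := rfl
@[simp] lemma reprMul_right {a b : A} {ι κ : Type*} (ra : Coalgebra.Repr ℂ a ι) (rb : Coalgebra.Repr ℂ b κ)
    (p : ra.ι × rb.ι) : (reprMul ra rb).right p = ra.right p.1 * rb.right p.2 := rfl
lemma reprMul_index {a b : A} {ι κ : Type*} (ra : Coalgebra.Repr ℂ a ι) (rb : Coalgebra.Repr ℂ b κ) :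
    (reprMul ra rb).index = ra.index ×ˢ rb.index := rfl

/-- The 6-linear evaluation map used to prove anti-multiplicativity of the antipode. -/
noncomputable def Xi : ((A ⊗[ℂ] (A ⊗[ℂ] A)) ⊗[ℂ] (A ⊗[ℂ] (A ⊗[ℂ] A))) →ₗ[ℂ] A :=
  mul' ℂ A ∘ₗ
    (TensorProduct.map ((𝒮 : A →ₗ[ℂ] A) ∘ₗ mul' ℂ A)
      (mul' ℂ A ∘ₗ TensorProduct.map (mul' ℂ A)
        (mul' ℂ A ∘ₗ TensorProduct.map (𝒮 : A →ₗ[ℂ] A) (𝒮 : A →ₗ[ℂ] A) ∘ₗ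
          (TensorProduct.comm ℂ A A).toLinearMap))) ∘ₗ
    ((tensorTensorTensorComm ℂ A A A A).toLinearMap.lTensor (A ⊗[ℂ] A)) ∘ₗ
    (tensorTensorTensorComm ℂ A (A ⊗[ℂ] A) A (A ⊗[ℂ] A)).toLinearMap

lemma Xi_tmul (x y z u v w : A) :
    Xi ((x ⊗ₜ (y ⊗ₜ z)) ⊗ₜ (u ⊗ₜ (v ⊗ₜ w))) = 𝒮 (x * u) * ((y * v) * (𝒮 w * 𝒮 z)) := by
  simp [Xi]

/-- The canonical triple comultiplication. -/
noncomputable def Tmap : A →ₗ[ℂ] A ⊗[ℂ] (A ⊗[ℂ] A) :=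
  (Coalgebra.comul (R := ℂ)).lTensor A ∘ₗ Coalgebra.comul

lemma Tmap_eq_right {a : A} {ι : Type*} {κ : ι → Type*} (r : Coalgebra.Repr ℂ a ι)
    (rr : ∀ i, Coalgebra.Repr ℂ (r.right i) (κ i)) :
    Tmap a = ∑ i ∈ r.index, ∑ j ∈ (rr i).index,
      r.left i ⊗ₜ[ℂ] ((rr i).left j ⊗ₜ[ℂ] (rr i).right j) := by
  have h : Tmap a = ∑ i ∈ r.index, r.left i ⊗ₜ[ℂ] Coalgebra.comul (r.right i) := by
    rw [Tmap, comp_apply, ← r.eq, map_sum]; simp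
  rw [h]
  exact Finset.sum_congr rfl fun i _ => by rw [← (rr i).eq, tmul_sum]

lemma Tmap_eq_left {a : A} {ι : Type*} {κ : ι → Type*} (r : Coalgebra.Repr ℂ a ι)
    (rl : ∀ i, Coalgebra.Repr ℂ (r.left i) (κ i)) :
    Tmap a = ∑ i ∈ r.index, ∑ j ∈ (rl i).index,
      (rl i).left j ⊗ₜ[ℂ] ((rl i).right j ⊗ₜ[ℂ] r.right i) := by
  have h0 : (Tmap : A →ₗ[ℂ] A ⊗[ℂ] (A ⊗[ℂ] A))
      = (TensorProduct.assoc ℂ A A A).toLinearMap ∘ₗ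
        (Coalgebra.comul (R := ℂ)).rTensor A ∘ₗ Coalgebra.comul := by
    rw [Tmap, ← Coalgebra.coassoc]
  rw [h0]
  simp only [comp_apply]
  rw [← r.eq, map_sum, map_sum]
  refine Finset.sum_congr rfl fun i _ => ?_
  rw [rTensor_tmul, ← (rl i).eq, sum_tmul, map_sum]
  exact Finset.sum_congr rfl fun j _ => by simp

lemma G1 (c y z : A) {m : A} {ι : Type*} (rm : Coalgebra.Repr ℂ m ι) :
    ∑ l ∈ rm.index, c * ((y * rm.left l) * (𝒮 (rm.right l) * z))
      = Coalgebra.counit (R := ℂ) m • (c * (y * z)) := by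
  have : ∀ l, c * ((y * rm.left l) * (𝒮 (rm.right l) * z))
      = c * (y * ((rm.left l * 𝒮 (rm.right l)) * z)) := fun l => by
    simp only [mul_assoc]
  simp_rw [this]
  rw [← Finset.mul_sum, ← Finset.mul_sum, ← Finset.sum_mul,
    HopfAlgebra.sum_mul_antipode_eq_smul rm]
  simp [smul_mul_assoc, mul_smul_comm]

lemma G2 (c : A) {m : A} {ι : Type*} (rm : Coalgebra.Repr ℂ m ι) :
    ∑ j ∈ rm.index, c * (rm.left j * 𝒮 (rm.right j)) = Coalgebra.counit (R := ℂ) m • c := by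
  rw [← Finset.mul_sum, HopfAlgebra.sum_mul_antipode_eq_smul rm, mul_smul_comm, mul_one]

lemma G3 {m : A} {ι : Type*} (rm : Coalgebra.Repr ℂ m ι) (C : A) :
    ∑ p ∈ rm.index, 𝒮 (rm.left p) * (rm.right p * C) = Coalgebra.counit (R := ℂ) m • C := by
  simp_rw [← mul_assoc]
  rw [← Finset.sum_mul, HopfAlgebra.sum_antipode_mul_eq_smul rm, smul_mul_assoc, one_mul]

theorem antipode_mul_anti (a b : A) : 𝒮 (a * b) = 𝒮 b * 𝒮 a := by
  classical
  obtain ⟨ra, rb⟩ : Coalgebra.Repr ℂ a (A × A) × Coalgebra.Repr ℂ b (A × A) := ⟨ℛ ℂ a, ℛ ℂ b⟩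
  have rra : ∀ i, Coalgebra.Repr ℂ (ra.right i) (A × A) := fun i => ℛ ℂ _
  have rrb : ∀ k, Coalgebra.Repr ℂ (rb.right k) (A × A) := fun k => ℛ ℂ _
  have rla : ∀ i, Coalgebra.Repr ℂ (ra.left i) (A × A) := fun i => ℛ ℂ _
  have rlb : ∀ k, Coalgebra.Repr ℂ (rb.left k) (A × A) := fun k => ℛ ℂ _
  have h1 : Xi (Tmap a ⊗ₜ[ℂ] Tmap b) = 𝒮 (a * b) := by
    rw [Tmap_eq_right ra rra, Tmap_eq_right rb rrb]
    simp only [sum_tmul]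
    simp only [tmul_sum]
    simp only [map_sum, Xi_tmul]
    calc
      ∑ i ∈ ra.index, ∑ j ∈ (rra i).index, ∑ k ∈ rb.index, ∑ l ∈ (rrb k).index,
          𝒮 (ra.left i * rb.left k) *
            (((rra i).left j * (rrb k).left l) * (𝒮 ((rrb k).right l) * 𝒮 ((rra i).right j)))
        = ∑ i ∈ ra.index, ∑ j ∈ (rra i).index, ∑ k ∈ rb.index,
            Coalgebra.counit (R := ℂ) (rb.right k) •
              (𝒮 (ra.left i * rb.left k) * ((rra i).left j * 𝒮 ((rra i).right j))) :=
          Finset.sum_congr rfl fun i _ => Finset.sum_congr rfl fun j _ =>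
            Finset.sum_congr rfl fun k _ => G1 _ _ _ (rrb k)
      _ = ∑ i ∈ ra.index, ∑ k ∈ rb.index, ∑ j ∈ (rra i).index,
            Coalgebra.counit (R := ℂ) (rb.right k) •
              (𝒮 (ra.left i * rb.left k) * ((rra i).left j * 𝒮 ((rra i).right j))) :=
          Finset.sum_congr rfl fun i _ => Finset.sum_comm
      _ = ∑ i ∈ ra.index, ∑ k ∈ rb.index,
            Coalgebra.counit (R := ℂ) (rb.right k) •
              (Coalgebra.counit (R := ℂ) (ra.right i) • 𝒮 (ra.left i * rb.left k)) := by
          refine Finset.sum_congr rfl fun i _ => Finset.sum_congr rfl fun k _ => ?_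
          rw [← Finset.smul_sum, G2 _ (rra i)]
      _ = 𝒮 ((∑ i ∈ ra.index, Coalgebra.counit (R := ℂ) (ra.right i) • ra.left i) *
            (∑ k ∈ rb.index, Coalgebra.counit (R := ℂ) (rb.right k) • rb.left k)) := by
          rw [Finset.sum_mul_sum]
          simp only [map_sum]
          refine Finset.sum_congr rfl fun i _ => Finset.sum_congr rfl fun k _ => ?_
          rw [smul_mul_assoc, mul_smul_comm, map_smul, map_smul, smul_comm]
      _ = 𝒮 (a * b) := by
          rw [sum_counit_right_smul_left ra, sum_counit_right_smul_left rb]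
  have h2 : Xi (Tmap a ⊗ₜ[ℂ] Tmap b) = 𝒮 b * 𝒮 a := by
    rw [Tmap_eq_left ra rla, Tmap_eq_left rb rlb]
    simp only [sum_tmul]
    simp only [tmul_sum]
    simp only [map_sum, Xi_tmul]
    calc
      ∑ i ∈ ra.index, ∑ j ∈ (rla i).index, ∑ k ∈ rb.index, ∑ l ∈ (rlb k).index,
          𝒮 ((rla i).left j * (rlb k).left l) *
            (((rla i).right j * (rlb k).right l) * (𝒮 (rb.right k) * 𝒮 (ra.right i)))
        = ∑ i ∈ ra.index, ∑ k ∈ rb.index, ∑ j ∈ (rla i).index, ∑ l ∈ (rlb k).index,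
            𝒮 ((rla i).left j * (rlb k).left l) *
              (((rla i).right j * (rlb k).right l) * (𝒮 (rb.right k) * 𝒮 (ra.right i))) :=
          Finset.sum_congr rfl fun i _ => Finset.sum_comm
      _ = ∑ i ∈ ra.index, ∑ k ∈ rb.index,
            Coalgebra.counit (R := ℂ) (ra.left i * rb.left k) •
              (𝒮 (rb.right k) * 𝒮 (ra.right i)) := by
          refine Finset.sum_congr rfl fun i _ => Finset.sum_congr rfl fun k _ => ?_
          rw [← Finset.sum_product']
          exact G3 (reprMul (rla i) (rlb k)) (𝒮 (rb.right k) * 𝒮 (ra.right i))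
      _ = ∑ k ∈ rb.index, ∑ i ∈ ra.index,
            (Coalgebra.counit (R := ℂ) (rb.left k) • 𝒮 (rb.right k)) *
              (Coalgebra.counit (R := ℂ) (ra.left i) • 𝒮 (ra.right i)) := by
          rw [Finset.sum_comm]
          refine Finset.sum_congr rfl fun k _ => Finset.sum_congr rfl fun i _ => ?_
          rw [Bialgebra.counit_mul, smul_mul_assoc, mul_smul_comm, smul_smul, mul_comm]
      _ = 𝒮 b * 𝒮 a := by
          rw [← Finset.sum_mul_sum]
          have hb : ∑ k ∈ rb.index, Coalgebra.counit (R := ℂ) (rb.left k) • 𝒮 (rb.right k)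
              = 𝒮 b := by
            simp_rw [← map_smul]
            rw [← map_sum, sum_counit_left_smul_right rb]
          have ha : ∑ i ∈ ra.index, Coalgebra.counit (R := ℂ) (ra.left i) • 𝒮 (ra.right i)
              = 𝒮 a := by
            simp_rw [← map_smul]
            rw [← map_sum, sum_counit_left_smul_right ra]
          rw [hb, ha]
  rw [← h1, h2]


/-- The `cop` antipode identity, requires `S ∘ S = id`. -/
lemma sum_right_mul_antipode_left (hS : (𝒮 : A →ₗ[ℂ] A) ∘ₗ (𝒮 : A →ₗ[ℂ] A) = LinearMap.id)
    {u : A} {ι : Type*} (r : Coalgebra.Repr ℂ u ι) :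
    ∑ i ∈ r.index, r.right i * 𝒮 (r.left i) = Coalgebra.counit (R := ℂ) u • 1 := by
  have hss : ∀ x : A, 𝒮 (𝒮 x) = x := fun x => by
    simpa using LinearMap.congr_fun hS x
  calc ∑ i ∈ r.index, r.right i * 𝒮 (r.left i)
      = ∑ i ∈ r.index, 𝒮 (r.left i * 𝒮 (r.right i)) := by
        refine Finset.sum_congr rfl fun i _ => ?_
        rw [antipode_mul_anti, hss]
    _ = 𝒮 (∑ i ∈ r.index, r.left i * 𝒮 (r.right i)) := (map_sum _ _ _).symm
    _ = Coalgebra.counit (R := ℂ) u • 1 := by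
        rw [HopfAlgebra.sum_mul_antipode_eq_smul r, map_smul, antipode_one']

/-- `Phi D (u ⊗ v) = D u * (1 ⊗ v)`. -/
noncomputable def Phi (D : A →ₗ[ℂ] A ⊗[ℂ] A) : A ⊗[ℂ] A →ₗ[ℂ] A ⊗[ℂ] A :=
  TensorProduct.lift (((LinearMap.mul ℂ (A ⊗[ℂ] A)) ∘ₗ D).compl₂ (TensorProduct.mk ℂ A A 1))

@[simp] lemma Phi_tmul (D : A →ₗ[ℂ] A ⊗[ℂ] A) (u v : A) :
    Phi D (u ⊗ₜ[ℂ] v) = D u * (1 ⊗ₜ[ℂ] v) := by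
  simp [Phi]

lemma Phi_mul_one_tmul (D : A →ₗ[ℂ] A ⊗[ℂ] A) (z : A ⊗[ℂ] A) (v : A) :
    Phi D (z * (1 ⊗ₜ[ℂ] v)) = Phi D z * (1 ⊗ₜ[ℂ] v) := by
  induction z using TensorProduct.induction_on with
  | zero => simp
  | tmul p q => simp [Algebra.TensorProduct.tmul_mul_tmul, mul_assoc]
  | add x y hx hy =>
      rw [add_mul, map_add, map_add, hx, hy, add_mul]

lemma Phi_comp (D E : A →ₗ[ℂ] A ⊗[ℂ] A) : Phi D ∘ₗ Phi E = Phi (Phi D ∘ₗ E) := by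
  apply TensorProduct.ext'
  intro u v
  simp [Phi_mul_one_tmul]

lemma Phi_mk_one : Phi ((TensorProduct.mk ℂ A A).flip 1) = LinearMap.id := by
  apply TensorProduct.ext'
  intro u v
  simp [Algebra.TensorProduct.tmul_mul_tmul]

/-- first Galois inverse identity (no `S²` needed). -/
lemma phi_inv_one :
    Phi (Coalgebra.comul (R := ℂ)) ∘ₗ ((𝒮 : A →ₗ[ℂ] A).lTensor A ∘ₗ Coalgebra.comul)
      = (TensorProduct.mk ℂ A A).flip 1 := by
  apply LinearMap.ext
  intro u
  have r : Coalgebra.Repr ℂ u (A × A) := ℛ ℂ u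
  have rl : ∀ i, Coalgebra.Repr ℂ (r.left i) (A × A) := fun i => ℛ ℂ _
  have rr : ∀ i, Coalgebra.Repr ℂ (r.right i) (A × A) := fun i => ℛ ℂ _
  have key := congrArg ((mul' ℂ A ∘ₗ (𝒮 : A →ₗ[ℂ] A).lTensor A).lTensor A)
    (Coalgebra.sum_tmul_tmul_eq r rl rr)
  simp only [map_sum, lTensor_tmul, comp_apply, mul'_apply] at key
  have lhs_eq : (Phi (Coalgebra.comul (R := ℂ)) ∘ₗ
      ((𝒮 : A →ₗ[ℂ] A).lTensor A ∘ₗ Coalgebra.comul)) u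
      = ∑ i ∈ r.index, ∑ j ∈ (rl i).index,
          (rl i).left j ⊗ₜ[ℂ] ((rl i).right j * 𝒮 (r.right i)) := by
    rw [comp_apply, comp_apply, ← r.eq, map_sum, map_sum]
    refine Finset.sum_congr rfl fun i _ => ?_
    rw [lTensor_tmul, Phi_tmul, ← (rl i).eq, Finset.sum_mul]
    refine Finset.sum_congr rfl fun j _ => ?_
    rw [Algebra.TensorProduct.tmul_mul_tmul, mul_one]
  rw [lhs_eq, key]
  calc ∑ i ∈ r.index, ∑ j ∈ (rr i).index,
        r.left i ⊗ₜ[ℂ] ((rr i).left j * 𝒮 ((rr i).right j))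
      = ∑ i ∈ r.index, Coalgebra.counit (R := ℂ) (r.right i) • (r.left i ⊗ₜ[ℂ] (1 : A)) := by
        refine Finset.sum_congr rfl fun i _ => ?_
        rw [← tmul_sum, HopfAlgebra.sum_mul_antipode_eq_smul (rr i), tmul_smul]
    _ = (∑ i ∈ r.index, Coalgebra.counit (R := ℂ) (r.right i) • r.left i) ⊗ₜ[ℂ] (1 : A) := by
        rw [sum_tmul]
        exact Finset.sum_congr rfl fun i _ => by rw [smul_tmul']
    _ = u ⊗ₜ[ℂ] 1 := by rw [sum_counit_right_smul_left r]

/-- the auxiliary rearrangement map `x ⊗ (y ⊗ z) ↦ z ⊗ (y * S x)`. -/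
noncomputable def Theta : A ⊗[ℂ] (A ⊗[ℂ] A) →ₗ[ℂ] A ⊗[ℂ] A :=
  (TensorProduct.comm ℂ A A).toLinearMap ∘ₗ
    ((mul' ℂ A ∘ₗ (𝒮 : A →ₗ[ℂ] A).lTensor A).rTensor A) ∘ₗ
    (TensorProduct.assoc ℂ A A A).symm.toLinearMap ∘ₗ
    (TensorProduct.comm ℂ (A ⊗[ℂ] A) A).toLinearMap ∘ₗ
    (TensorProduct.assoc ℂ A A A).symm.toLinearMap ∘ₗ
    ((TensorProduct.comm ℂ A A).toLinearMap.lTensor A)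

@[simp] lemma Theta_tmul (x y z : A) :
    Theta (x ⊗ₜ (y ⊗ₜ z)) = z ⊗ₜ[ℂ] (y * 𝒮 x) := by
  simp [Theta]

/-- second Galois inverse identity (uses `S² = id`). -/
lemma phi_inv_two (hS : (𝒮 : A →ₗ[ℂ] A) ∘ₗ (𝒮 : A →ₗ[ℂ] A) = LinearMap.id) :
    Phi ((TensorProduct.comm ℂ A A).toLinearMap ∘ₗ Coalgebra.comul (R := ℂ)) ∘ₗ
      ((TensorProduct.comm ℂ A A).toLinearMap ∘ₗ (𝒮 : A →ₗ[ℂ] A).rTensor A ∘ₗ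
        Coalgebra.comul)
      = (TensorProduct.mk ℂ A A).flip 1 := by
  apply LinearMap.ext
  intro u
  have r : Coalgebra.Repr ℂ u (A × A) := ℛ ℂ u
  have rl : ∀ i, Coalgebra.Repr ℂ (r.left i) (A × A) := fun i => ℛ ℂ _
  have rr : ∀ i, Coalgebra.Repr ℂ (r.right i) (A × A) := fun i => ℛ ℂ _
  have key := congrArg (Theta (A := A)) (Coalgebra.sum_tmul_tmul_eq r rl rr)
  simp only [map_sum, Theta_tmul] at key
  have lhs_eq : (Phi ((TensorProduct.comm ℂ A A).toLinearMap ∘ₗ Coalgebra.comul (R := ℂ)) ∘ₗ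
      ((TensorProduct.comm ℂ A A).toLinearMap ∘ₗ (𝒮 : A →ₗ[ℂ] A).rTensor A ∘ₗ
        Coalgebra.comul)) u
      = ∑ i ∈ r.index, ∑ j ∈ (rr i).index,
          (rr i).right j ⊗ₜ[ℂ] ((rr i).left j * 𝒮 (r.left i)) := by
    simp only [comp_apply]
    rw [← r.eq, map_sum, map_sum, map_sum]
    refine Finset.sum_congr rfl fun i _ => ?_
    rw [rTensor_tmul]
    simp only [LinearEquiv.coe_coe, comm_tmul]
    rw [Phi_tmul, comp_apply, ← (rr i).eq, map_sum]
    simp only [LinearEquiv.coe_coe, comm_tmul]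
    rw [Finset.sum_mul]
    refine Finset.sum_congr rfl fun j _ => ?_
    rw [Algebra.TensorProduct.tmul_mul_tmul, mul_one]
  rw [lhs_eq, ← key]
  calc ∑ i ∈ r.index, ∑ j ∈ (rl i).index,
        r.right i ⊗ₜ[ℂ] ((rl i).right j * 𝒮 ((rl i).left j))
      = ∑ i ∈ r.index, Coalgebra.counit (R := ℂ) (r.left i) • (r.right i ⊗ₜ[ℂ] (1 : A)) := by
        refine Finset.sum_congr rfl fun i _ => ?_
        rw [← tmul_sum, sum_right_mul_antipode_left hS (rl i), tmul_smul]
    _ = (∑ i ∈ r.index, Coalgebra.counit (R := ℂ) (r.left i) • r.right i) ⊗ₜ[ℂ] (1 : A) := by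
        rw [sum_tmul]
        exact Finset.sum_congr rfl fun i _ => by rw [smul_tmul']
    _ = u ⊗ₜ[ℂ] 1 := by rw [sum_counit_left_smul_right r]

lemma comm_mul (z w : A ⊗[ℂ] A) :
    TensorProduct.comm ℂ A A (z * w)
      = TensorProduct.comm ℂ A A z * TensorProduct.comm ℂ A A w := by
  induction z using TensorProduct.induction_on with
  | zero => simp
  | add z₁ z₂ h₁ h₂ => rw [add_mul, map_add, map_add, h₁, h₂, add_mul]
  | tmul p q =>
    induction w using TensorProduct.induction_on with
    | zero => simp
    | add w₁ w₂ h₁ h₂ => rw [mul_add, map_add, map_add, h₁, h₂, mul_add]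
    | tmul p' q' => simp [Algebra.TensorProduct.tmul_mul_tmul]

lemma conj_one (x : A) :
    Phi (Coalgebra.comul (R := ℂ)) ∘ₗ (mulLeft ℂ x).rTensor A
      = mulLeft ℂ (Coalgebra.comul (R := ℂ) x) ∘ₗ Phi (Coalgebra.comul (R := ℂ)) := by
  apply TensorProduct.ext'
  intro u v
  simp only [comp_apply, rTensor_tmul, Phi_tmul, mulLeft_apply]
  rw [Bialgebra.comul_mul, mul_assoc]

lemma conj_two (x : A) :
    Phi ((TensorProduct.comm ℂ A A).toLinearMap ∘ₗ Coalgebra.comul (R := ℂ)) ∘ₗ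
        (mulLeft ℂ x).rTensor A
      = mulLeft ℂ (TensorProduct.comm ℂ A A (Coalgebra.comul (R := ℂ) x)) ∘ₗ
        Phi ((TensorProduct.comm ℂ A A).toLinearMap ∘ₗ Coalgebra.comul (R := ℂ)) := by
  apply TensorProduct.ext'
  intro u v
  simp only [comp_apply, rTensor_tmul, Phi_tmul, mulLeft_apply, LinearEquiv.coe_coe]
  rw [Bialgebra.comul_mul, comm_mul, mul_assoc]

lemma opEq_one (x : A) :
    mulLeft ℂ (Coalgebra.comul (R := ℂ) x)
      = Phi (Coalgebra.comul (R := ℂ)) ∘ₗ (mulLeft ℂ x).rTensor A ∘ₗ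
          Phi ((𝒮 : A →ₗ[ℂ] A).lTensor A ∘ₗ Coalgebra.comul) := by
  have hinv : Phi (Coalgebra.comul (R := ℂ)) ∘ₗ
      Phi ((𝒮 : A →ₗ[ℂ] A).lTensor A ∘ₗ Coalgebra.comul) = LinearMap.id := by
    rw [Phi_comp, phi_inv_one, Phi_mk_one]
  calc mulLeft ℂ (Coalgebra.comul (R := ℂ) x)
      = (mulLeft ℂ (Coalgebra.comul (R := ℂ) x) ∘ₗ Phi (Coalgebra.comul (R := ℂ))) ∘ₗ
          Phi ((𝒮 : A →ₗ[ℂ] A).lTensor A ∘ₗ Coalgebra.comul) := by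
        rw [LinearMap.comp_assoc, hinv, comp_id]
    _ = (Phi (Coalgebra.comul (R := ℂ)) ∘ₗ (mulLeft ℂ x).rTensor A) ∘ₗ
          Phi ((𝒮 : A →ₗ[ℂ] A).lTensor A ∘ₗ Coalgebra.comul) := by rw [conj_one]
    _ = _ := by rw [LinearMap.comp_assoc]

lemma opEq_two (hS : (𝒮 : A →ₗ[ℂ] A) ∘ₗ (𝒮 : A →ₗ[ℂ] A) = LinearMap.id) (x : A) :
    mulLeft ℂ (TensorProduct.comm ℂ A A (Coalgebra.comul (R := ℂ) x))
      = Phi ((TensorProduct.comm ℂ A A).toLinearMap ∘ₗ Coalgebra.comul (R := ℂ)) ∘ₗ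
          (mulLeft ℂ x).rTensor A ∘ₗ
          Phi ((TensorProduct.comm ℂ A A).toLinearMap ∘ₗ (𝒮 : A →ₗ[ℂ] A).rTensor A ∘ₗ
            Coalgebra.comul) := by
  have hinv : Phi ((TensorProduct.comm ℂ A A).toLinearMap ∘ₗ Coalgebra.comul (R := ℂ)) ∘ₗ
      Phi ((TensorProduct.comm ℂ A A).toLinearMap ∘ₗ (𝒮 : A →ₗ[ℂ] A).rTensor A ∘ₗ
        Coalgebra.comul) = LinearMap.id := by
    rw [Phi_comp, phi_inv_two hS, Phi_mk_one]
  calc mulLeft ℂ (TensorProduct.comm ℂ A A (Coalgebra.comul (R := ℂ) x))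
      = (mulLeft ℂ (TensorProduct.comm ℂ A A (Coalgebra.comul (R := ℂ) x)) ∘ₗ
          Phi ((TensorProduct.comm ℂ A A).toLinearMap ∘ₗ Coalgebra.comul (R := ℂ))) ∘ₗ
          Phi ((TensorProduct.comm ℂ A A).toLinearMap ∘ₗ (𝒮 : A →ₗ[ℂ] A).rTensor A ∘ₗ
            Coalgebra.comul) := by
        rw [LinearMap.comp_assoc, hinv, comp_id]
    _ = (Phi ((TensorProduct.comm ℂ A A).toLinearMap ∘ₗ Coalgebra.comul (R := ℂ)) ∘ₗ
          (mulLeft ℂ x).rTensor A) ∘ₗ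
          Phi ((TensorProduct.comm ℂ A A).toLinearMap ∘ₗ (𝒮 : A →ₗ[ℂ] A).rTensor A ∘ₗ
            Coalgebra.comul) := by rw [conj_two]
    _ = _ := by rw [LinearMap.comp_assoc]

section Traces

variable [FiniteDimensional ℂ A]

lemma trace_smulRight' (χ : A →ₗ[ℂ] ℂ) (y : A) :
    LinearMap.trace ℂ A (χ.smulRight y) = χ y := by
  have h : χ.smulRight y = dualTensorHom ℂ A A (χ ⊗ₜ y) := by
    ext w; simp
  rw [h, trace_eq_contract_apply, contractLeft_apply]

lemma trace_dth (χ : A →ₗ[ℂ] ℂ) (y : A) :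
    LinearMap.trace ℂ A (dualTensorHom ℂ A A (χ ⊗ₜ y)) = χ y := by
  rw [trace_eq_contract_apply, contractLeft_apply]

/-- `x ⊗ (y ⊗ z) ↦ φ x * ψ (z * (S y * q))`. -/
noncomputable def OmegaOne (φ ψ : A →ₗ[ℂ] ℂ) (q : A) : A ⊗[ℂ] (A ⊗[ℂ] A) →ₗ[ℂ] ℂ :=
  mul' ℂ ℂ ∘ₗ TensorProduct.map φ
    (ψ ∘ₗ mul' ℂ A ∘ₗ (TensorProduct.comm ℂ A A).toLinearMap ∘ₗ
      ((mulRight ℂ q ∘ₗ (𝒮 : A →ₗ[ℂ] A)).rTensor A))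

@[simp] lemma OmegaOne_tmul (φ ψ : A →ₗ[ℂ] ℂ) (q x y z : A) :
    OmegaOne φ ψ q (x ⊗ₜ (y ⊗ₜ z)) = φ x * ψ (z * (𝒮 y * q)) := by
  simp [OmegaOne]

/-- `x ⊗ (y ⊗ z) ↦ ψ (x * (S y * q)) * φ z`. -/
noncomputable def OmegaTwo (φ ψ : A →ₗ[ℂ] ℂ) (q : A) : A ⊗[ℂ] (A ⊗[ℂ] A) →ₗ[ℂ] ℂ :=
  mul' ℂ ℂ ∘ₗ TensorProduct.map
    (ψ ∘ₗ mul' ℂ A ∘ₗ ((mulRight ℂ q ∘ₗ (𝒮 : A →ₗ[ℂ] A)).lTensor A)) φ ∘ₗ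
    (TensorProduct.assoc ℂ A A A).symm.toLinearMap

@[simp] lemma OmegaTwo_tmul (φ ψ : A →ₗ[ℂ] ℂ) (q x y z : A) :
    OmegaTwo φ ψ q (x ⊗ₜ (y ⊗ₜ z)) = ψ (x * (𝒮 y * q)) * φ z := by
  simp [OmegaTwo]

lemma core_one (hS : (𝒮 : A →ₗ[ℂ] A) ∘ₗ (𝒮 : A →ₗ[ℂ] A) = LinearMap.id)
    (φ ψ : A →ₗ[ℂ] ℂ) (p q : A) :
    LinearMap.trace ℂ (A ⊗[ℂ] A)
      ((dualTensorHom ℂ A A (φ ⊗ₜ p)).rTensor A ∘ₗ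
        (Phi ((𝒮 : A →ₗ[ℂ] A).lTensor A ∘ₗ Coalgebra.comul) ∘ₗ
          ((dualTensorHom ℂ A A (ψ ⊗ₜ q)).lTensor A ∘ₗ Phi (Coalgebra.comul (R := ℂ)))))
      = φ p * ψ q := by
  have rp : Coalgebra.Repr ℂ p (A × A) := ℛ ℂ p
  have rl : ∀ i, Coalgebra.Repr ℂ (rp.left i) (A × A) := fun i => ℛ ℂ _
  have rr : ∀ i, Coalgebra.Repr ℂ (rp.right i) (A × A) := fun i => ℛ ℂ _
  -- split the rank one map through ℂ
  have hsplit : dualTensorHom ℂ A A (φ ⊗ₜ p) = toSpanSingleton ℂ A p ∘ₗ φ := by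
    ext w; simp
  rw [hsplit, rTensor_comp, LinearMap.comp_assoc]
  rw [LinearMap.trace_comp_comm']
  rw [← LinearMap.trace_conj' _ (TensorProduct.lid ℂ A)]
  have hop : (TensorProduct.lid ℂ A).conj
      ((φ.rTensor A ∘ₗ (Phi ((𝒮 : A →ₗ[ℂ] A).lTensor A ∘ₗ Coalgebra.comul) ∘ₗ
          ((dualTensorHom ℂ A A (ψ ⊗ₜ q)).lTensor A ∘ₗ Phi (Coalgebra.comul (R := ℂ))))) ∘ₗ
        (toSpanSingleton ℂ A p).rTensor A)
      = ∑ i ∈ rp.index, ∑ j ∈ (rl i).index,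
          (ψ ∘ₗ mulLeft ℂ (rp.right i)).smulRight
            (φ ((rl i).left j) • (𝒮 ((rl i).right j) * q)) := by
    apply LinearMap.ext
    intro w
    rw [LinearEquiv.conj_apply_apply, TensorProduct.lid_symm_apply]
    simp only [comp_apply, rTensor_tmul, toSpanSingleton_apply, one_smul]
    have e1 : Phi (Coalgebra.comul (R := ℂ)) (p ⊗ₜ[ℂ] w)
        = ∑ i ∈ rp.index, rp.left i ⊗ₜ[ℂ] (rp.right i * w) := by
      rw [Phi_tmul, ← rp.eq, Finset.sum_mul]
      exact Finset.sum_congr rfl fun i _ => by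
        rw [Algebra.TensorProduct.tmul_mul_tmul, mul_one]
    rw [e1, map_sum, map_sum, map_sum, map_sum]
    have e2 : ∀ i ∈ rp.index,
        TensorProduct.lid ℂ A (φ.rTensor A
          (Phi ((𝒮 : A →ₗ[ℂ] A).lTensor A ∘ₗ Coalgebra.comul)
            ((dualTensorHom ℂ A A (ψ ⊗ₜ q)).lTensor A
              (rp.left i ⊗ₜ[ℂ] (rp.right i * w)))))
        = ∑ j ∈ (rl i).index,
            ψ (rp.right i * w) • (φ ((rl i).left j) • (𝒮 ((rl i).right j) * q)) := by
      intro i _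
      rw [lTensor_tmul, dualTensorHom_apply, tmul_smul, map_smul, map_smul, map_smul]
      rw [Phi_tmul, comp_apply, ← (rl i).eq, map_sum, Finset.sum_mul]
      simp only [lTensor_tmul]
      rw [map_sum, map_sum, Finset.smul_sum]
      refine Finset.sum_congr rfl fun j _ => ?_
      rw [Algebra.TensorProduct.tmul_mul_tmul, mul_one, rTensor_tmul, TensorProduct.lid_tmul]
    rw [Finset.sum_congr rfl e2]
    simp only [LinearMap.sum_apply, smulRight_apply, comp_apply, mulLeft_apply]
  rw [hop, map_sum]
  simp only [map_sum]
  have e3 : ∀ i ∈ rp.index, ∀ j ∈ (rl i).index,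
      LinearMap.trace ℂ A ((ψ ∘ₗ mulLeft ℂ (rp.right i)).smulRight
        (φ ((rl i).left j) • (𝒮 ((rl i).right j) * q)))
      = φ ((rl i).left j) * ψ (rp.right i * (𝒮 ((rl i).right j) * q)) := by
    intro i _ j _
    rw [trace_smulRight', comp_apply, mulLeft_apply, mul_smul_comm, map_smul, smul_eq_mul]
  rw [Finset.sum_congr rfl fun i hi => Finset.sum_congr rfl fun j hj => e3 i hi j hj]
  -- now use coassociativity and the cop antipode identity
  have key := congrArg (OmegaOne φ ψ q) (Coalgebra.sum_tmul_tmul_eq rp rl rr)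
  simp only [map_sum, OmegaOne_tmul] at key
  rw [key]
  calc ∑ i ∈ rp.index, ∑ j ∈ (rr i).index,
        φ (rp.left i) * ψ ((rr i).right j * (𝒮 ((rr i).left j) * q))
      = ∑ i ∈ rp.index,
          φ (rp.left i) * ψ (Coalgebra.counit (R := ℂ) (rp.right i) • q) := by
        refine Finset.sum_congr rfl fun i _ => ?_
        rw [← Finset.mul_sum, ← map_sum]
        congr 2
        calc ∑ j ∈ (rr i).index, (rr i).right j * (𝒮 ((rr i).left j) * q)
            = (∑ j ∈ (rr i).index, (rr i).right j * 𝒮 ((rr i).left j)) * q := by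
              rw [Finset.sum_mul]
              exact Finset.sum_congr rfl fun j _ => (mul_assoc _ _ _).symm
          _ = Coalgebra.counit (R := ℂ) (rp.right i) • q := by
              rw [sum_right_mul_antipode_left hS (rr i), smul_mul_assoc, one_mul]
    _ = (∑ i ∈ rp.index, Coalgebra.counit (R := ℂ) (rp.right i) • φ (rp.left i)) * ψ q := by
        rw [Finset.sum_mul]
        refine Finset.sum_congr rfl fun i _ => ?_
        rw [map_smul, smul_eq_mul, smul_eq_mul]
        ring
    _ = φ p * ψ q := by
        simp_rw [← map_smul]
        rw [← map_sum, sum_counit_right_smul_left rp]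

lemma core_two (φ ψ : A →ₗ[ℂ] ℂ) (p q : A) :
    LinearMap.trace ℂ (A ⊗[ℂ] A)
      ((dualTensorHom ℂ A A (φ ⊗ₜ p)).rTensor A ∘ₗ
        (Phi ((TensorProduct.comm ℂ A A).toLinearMap ∘ₗ (𝒮 : A →ₗ[ℂ] A).rTensor A ∘ₗ
            Coalgebra.comul) ∘ₗ
          ((dualTensorHom ℂ A A (ψ ⊗ₜ q)).lTensor A ∘ₗ
            Phi ((TensorProduct.comm ℂ A A).toLinearMap ∘ₗ Coalgebra.comul (R := ℂ)))))
      = φ p * ψ q := by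
  have rp : Coalgebra.Repr ℂ p (A × A) := ℛ ℂ p
  have rl : ∀ i, Coalgebra.Repr ℂ (rp.left i) (A × A) := fun i => ℛ ℂ _
  have rr : ∀ i, Coalgebra.Repr ℂ (rp.right i) (A × A) := fun i => ℛ ℂ _
  have hsplit : dualTensorHom ℂ A A (φ ⊗ₜ p) = toSpanSingleton ℂ A p ∘ₗ φ := by
    ext w; simp
  rw [hsplit, rTensor_comp, LinearMap.comp_assoc]
  rw [LinearMap.trace_comp_comm']
  rw [← LinearMap.trace_conj' _ (TensorProduct.lid ℂ A)]
  have hop : (TensorProduct.lid ℂ A).conj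
      ((φ.rTensor A ∘ₗ (Phi ((TensorProduct.comm ℂ A A).toLinearMap ∘ₗ
            (𝒮 : A →ₗ[ℂ] A).rTensor A ∘ₗ Coalgebra.comul) ∘ₗ
          ((dualTensorHom ℂ A A (ψ ⊗ₜ q)).lTensor A ∘ₗ
            Phi ((TensorProduct.comm ℂ A A).toLinearMap ∘ₗ Coalgebra.comul (R := ℂ))))) ∘ₗ
        (toSpanSingleton ℂ A p).rTensor A)
      = ∑ i ∈ rp.index, ∑ j ∈ (rr i).index,
          (ψ ∘ₗ mulLeft ℂ (rp.left i)).smulRight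
            (φ ((rr i).right j) • (𝒮 ((rr i).left j) * q)) := by
    apply LinearMap.ext
    intro w
    rw [LinearEquiv.conj_apply_apply, TensorProduct.lid_symm_apply]
    simp only [comp_apply, rTensor_tmul, toSpanSingleton_apply, one_smul]
    have e1 : Phi ((TensorProduct.comm ℂ A A).toLinearMap ∘ₗ Coalgebra.comul (R := ℂ))
        (p ⊗ₜ[ℂ] w)
        = ∑ i ∈ rp.index, rp.right i ⊗ₜ[ℂ] (rp.left i * w) := by
      rw [Phi_tmul, comp_apply, ← rp.eq, map_sum]
      simp only [LinearEquiv.coe_coe, comm_tmul]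
      rw [Finset.sum_mul]
      exact Finset.sum_congr rfl fun i _ => by
        rw [Algebra.TensorProduct.tmul_mul_tmul, mul_one]
    rw [e1, map_sum, map_sum, map_sum, map_sum]
    have e2 : ∀ i ∈ rp.index,
        TensorProduct.lid ℂ A (φ.rTensor A
          (Phi ((TensorProduct.comm ℂ A A).toLinearMap ∘ₗ
              (𝒮 : A →ₗ[ℂ] A).rTensor A ∘ₗ Coalgebra.comul)
            ((dualTensorHom ℂ A A (ψ ⊗ₜ q)).lTensor A
              (rp.right i ⊗ₜ[ℂ] (rp.left i * w)))))
        = ∑ j ∈ (rr i).index,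
            ψ (rp.left i * w) • (φ ((rr i).right j) • (𝒮 ((rr i).left j) * q)) := by
      intro i _
      rw [lTensor_tmul, dualTensorHom_apply, tmul_smul, map_smul, map_smul, map_smul]
      rw [Phi_tmul, comp_apply, comp_apply, ← (rr i).eq, map_sum, map_sum]
      simp only [rTensor_tmul, LinearEquiv.coe_coe, comm_tmul]
      rw [Finset.sum_mul, map_sum, map_sum, Finset.smul_sum]
      refine Finset.sum_congr rfl fun j _ => ?_
      rw [Algebra.TensorProduct.tmul_mul_tmul, mul_one, rTensor_tmul, TensorProduct.lid_tmul]
    rw [Finset.sum_congr rfl e2]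
    simp only [LinearMap.sum_apply, smulRight_apply, comp_apply, mulLeft_apply]
  rw [hop, map_sum]
  simp only [map_sum]
  have e3 : ∀ i ∈ rp.index, ∀ j ∈ (rr i).index,
      LinearMap.trace ℂ A ((ψ ∘ₗ mulLeft ℂ (rp.left i)).smulRight
        (φ ((rr i).right j) • (𝒮 ((rr i).left j) * q)))
      = ψ (rp.left i * (𝒮 ((rr i).left j) * q)) * φ ((rr i).right j) := by
    intro i _ j _
    rw [trace_smulRight', comp_apply, mulLeft_apply, mul_smul_comm, map_smul, smul_eq_mul]
    ring
  rw [Finset.sum_congr rfl fun i hi => Finset.sum_congr rfl fun j hj => e3 i hi j hj]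
  have key := congrArg (OmegaTwo φ ψ q) (Coalgebra.sum_tmul_tmul_eq rp rl rr)
  simp only [map_sum, OmegaTwo_tmul] at key
  rw [← key]
  calc ∑ i ∈ rp.index, ∑ j ∈ (rl i).index,
        ψ ((rl i).left j * (𝒮 ((rl i).right j) * q)) * φ (rp.right i)
      = ∑ i ∈ rp.index,
          ψ (Coalgebra.counit (R := ℂ) (rp.left i) • q) * φ (rp.right i) := by
        refine Finset.sum_congr rfl fun i _ => ?_
        rw [← Finset.sum_mul, ← map_sum]
        congr 3
        calc ∑ j ∈ (rl i).index, (rl i).left j * (𝒮 ((rl i).right j) * q)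
            = (∑ j ∈ (rl i).index, (rl i).left j * 𝒮 ((rl i).right j)) * q := by
              rw [Finset.sum_mul]
              exact Finset.sum_congr rfl fun j _ => (mul_assoc _ _ _).symm
          _ = Coalgebra.counit (R := ℂ) (rp.left i) • q := by
              rw [HopfAlgebra.sum_mul_antipode_eq_smul (rl i), smul_mul_assoc, one_mul]
    _ = (∑ i ∈ rp.index, Coalgebra.counit (R := ℂ) (rp.left i) • φ (rp.right i)) * ψ q := by
        rw [Finset.sum_mul]
        refine Finset.sum_congr rfl fun i _ => ?_
        rw [map_smul, smul_eq_mul, smul_eq_mul]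
        ring
    _ = φ p * ψ q := by
        simp_rw [← map_smul]
        rw [← map_sum, sum_counit_left_smul_right rp]

lemma traceC_general (K1 K2 : A ⊗[ℂ] A →ₗ[ℂ] A ⊗[ℂ] A)
    (hcore : ∀ (φ ψ : A →ₗ[ℂ] ℂ) (p q : A),
      LinearMap.trace ℂ (A ⊗[ℂ] A) ((dualTensorHom ℂ A A (φ ⊗ₜ p)).rTensor A ∘ₗ
        (K1 ∘ₗ ((dualTensorHom ℂ A A (ψ ⊗ₜ q)).lTensor A ∘ₗ K2))) = φ p * ψ q)
    (h g : A →ₗ[ℂ] A) :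
    LinearMap.trace ℂ (A ⊗[ℂ] A) (h.rTensor A ∘ₗ (K1 ∘ₗ (g.lTensor A ∘ₗ K2)))
      = LinearMap.trace ℂ A h * LinearMap.trace ℂ A g := by
  have hsurj : Function.Surjective (⇑(dualTensorHom ℂ A A : _ →ₗ[ℂ] (A →ₗ[ℂ] A))) := fun x =>
    ⟨(dualTensorHomEquivOfBasis (Module.Free.chooseBasis ℂ A)).symm x,
      dualTensorHomEquivOfBasis_symm_cancel_right _ x⟩
  obtain ⟨t, rfl⟩ := hsurj h
  obtain ⟨s, rfl⟩ := hsurj g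
  induction t using TensorProduct.induction_on with
  | zero => simp
  | add t₁ t₂ h₁ h₂ =>
      simp only [map_add, rTensor_add, add_comp] at h₁ h₂ ⊢
      rw [h₁, h₂, add_mul]
  | tmul φ p =>
      induction s using TensorProduct.induction_on with
      | zero => simp
      | add s₁ s₂ h₁ h₂ =>
          simp only [map_add, lTensor_add, add_comp, comp_add] at h₁ h₂ ⊢
          rw [h₁, h₂, mul_add]
      | tmul ψ q => rw [hcore, trace_dth, trace_dth]

lemma traceC_one (hS : (𝒮 : A →ₗ[ℂ] A) ∘ₗ (𝒮 : A →ₗ[ℂ] A) = LinearMap.id) (h g : A →ₗ[ℂ] A) :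
    LinearMap.trace ℂ (A ⊗[ℂ] A) (h.rTensor A ∘ₗ
        (Phi ((𝒮 : A →ₗ[ℂ] A).lTensor A ∘ₗ Coalgebra.comul) ∘ₗ
          (g.lTensor A ∘ₗ Phi (Coalgebra.comul (R := ℂ)))))
      = LinearMap.trace ℂ A h * LinearMap.trace ℂ A g :=
  traceC_general _ _ (fun φ ψ p q => core_one hS φ ψ p q) h g

lemma traceC_two (h g : A →ₗ[ℂ] A) :
    LinearMap.trace ℂ (A ⊗[ℂ] A) (h.rTensor A ∘ₗ
        (Phi ((TensorProduct.comm ℂ A A).toLinearMap ∘ₗ (𝒮 : A →ₗ[ℂ] A).rTensor A ∘ₗ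
            Coalgebra.comul) ∘ₗ
          (g.lTensor A ∘ₗ
            Phi ((TensorProduct.comm ℂ A A).toLinearMap ∘ₗ Coalgebra.comul (R := ℂ)))))
      = LinearMap.trace ℂ A h * LinearMap.trace ℂ A g :=
  traceC_general _ _ (fun φ ψ p q => core_two φ ψ p q) h g

lemma mul_tmul_op (l r : A) :
    (LinearMap.mul ℂ (A ⊗[ℂ] A)) (l ⊗ₜ[ℂ] r)
      = TensorProduct.map (mulLeft ℂ l) (mulLeft ℂ r) := by
  apply TensorProduct.ext'
  intro u v
  simp [LinearMap.mul_apply', Algebra.TensorProduct.tmul_mul_tmul]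

lemma map_comp_lTensor' (f₁ f₂ g : A →ₗ[ℂ] A) :
    TensorProduct.map f₁ f₂ ∘ₗ g.lTensor A = TensorProduct.map f₁ (f₂ ∘ₗ g) := by
  apply TensorProduct.ext'
  intro u v
  simp

lemma mulLeft_comp_smulRight (f : A →ₗ[ℂ] ℂ) (r : A) :
    mulLeft ℂ r ∘ₗ f.smulRight (1 : A) = f.smulRight r := by
  ext v; simp [mul_smul_comm]

lemma mul_z_eq_mulLeft (z : A ⊗[ℂ] A) :
    (LinearMap.mul ℂ (A ⊗[ℂ] A)) z = mulLeft ℂ z := by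
  ext w; simp [LinearMap.mul_apply']

lemma invariance_two (hS : (𝒮 : A →ₗ[ℂ] A) ∘ₗ (𝒮 : A →ₗ[ℂ] A) = LinearMap.id)
    (τ : A →ₗ[ℂ] ℂ) (hτ : ∀ a : A, τ a = LinearMap.trace ℂ A (LinearMap.mulLeft ℂ a))
    (f : A →ₗ[ℂ] ℂ) (a : A) :
    f (TensorProduct.lid ℂ A (τ.rTensor A (Coalgebra.comul a))) = τ a * f 1 := by
  have hfun : (f ∘ₗ (TensorProduct.lid ℂ A).toLinearMap ∘ₗ τ.rTensor A)
      = (LinearMap.trace ℂ (A ⊗[ℂ] A)) ∘ₗ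
        (LinearMap.lcomp ℂ (A ⊗[ℂ] A) ((f.smulRight (1 : A)).lTensor A)) ∘ₗ
        (LinearMap.mul ℂ (A ⊗[ℂ] A)) := by
    apply TensorProduct.ext'
    intro l r
    simp only [comp_apply, rTensor_tmul, LinearEquiv.coe_coe, TensorProduct.lid_tmul,
      map_smul, smul_eq_mul]
    rw [mul_tmul_op, LinearMap.lcomp_apply', map_comp_lTensor', trace_tensorProduct',
      mulLeft_comp_smulRight, trace_smulRight', ← hτ l]
  have happ := LinearMap.congr_fun hfun (Coalgebra.comul a)
  simp only [comp_apply, LinearEquiv.coe_coe, LinearMap.lcomp_apply'] at happ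
  rw [happ, mul_z_eq_mulLeft]
  have h1 : mulLeft ℂ (Coalgebra.comul (R := ℂ) a) ∘ₗ (f.smulRight (1 : A)).lTensor A
      = Phi (Coalgebra.comul (R := ℂ)) ∘ₗ ((mulLeft ℂ a).rTensor A ∘ₗ
          (Phi ((𝒮 : A →ₗ[ℂ] A).lTensor A ∘ₗ Coalgebra.comul) ∘ₗ
            (f.smulRight (1 : A)).lTensor A)) := by
    rw [opEq_one a]
    simp only [LinearMap.comp_assoc]
  rw [h1, LinearMap.trace_comp_comm']
  have h2 : ((mulLeft ℂ a).rTensor A ∘ₗ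
        (Phi ((𝒮 : A →ₗ[ℂ] A).lTensor A ∘ₗ Coalgebra.comul) ∘ₗ
          (f.smulRight (1 : A)).lTensor A)) ∘ₗ Phi (Coalgebra.comul (R := ℂ))
      = (mulLeft ℂ a).rTensor A ∘ₗ
          (Phi ((𝒮 : A →ₗ[ℂ] A).lTensor A ∘ₗ Coalgebra.comul) ∘ₗ
            ((f.smulRight (1 : A)).lTensor A ∘ₗ Phi (Coalgebra.comul (R := ℂ)))) := by
    simp only [LinearMap.comp_assoc]
  rw [h2, traceC_one hS, trace_smulRight', ← hτ a]

lemma invariance_one (hS : (𝒮 : A →ₗ[ℂ] A) ∘ₗ (𝒮 : A →ₗ[ℂ] A) = LinearMap.id)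
    (τ : A →ₗ[ℂ] ℂ) (hτ : ∀ a : A, τ a = LinearMap.trace ℂ A (LinearMap.mulLeft ℂ a))
    (f : A →ₗ[ℂ] ℂ) (a : A) :
    f (TensorProduct.rid ℂ A (τ.lTensor A (Coalgebra.comul a))) = τ a * f 1 := by
  have hfun : (f ∘ₗ (TensorProduct.rid ℂ A).toLinearMap ∘ₗ τ.lTensor A)
      = (LinearMap.trace ℂ (A ⊗[ℂ] A)) ∘ₗ
        (LinearMap.lcomp ℂ (A ⊗[ℂ] A) ((f.smulRight (1 : A)).lTensor A)) ∘ₗ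
        (LinearMap.mul ℂ (A ⊗[ℂ] A)) ∘ₗ (TensorProduct.comm ℂ A A).toLinearMap := by
    apply TensorProduct.ext'
    intro l r
    simp only [comp_apply, lTensor_tmul, LinearEquiv.coe_coe, TensorProduct.rid_tmul,
      map_smul, smul_eq_mul, comm_tmul]
    rw [mul_tmul_op, LinearMap.lcomp_apply', map_comp_lTensor', trace_tensorProduct',
      mulLeft_comp_smulRight, trace_smulRight', ← hτ r]
  have happ := LinearMap.congr_fun hfun (Coalgebra.comul a)
  simp only [comp_apply, LinearEquiv.coe_coe, LinearMap.lcomp_apply'] at happ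
  rw [happ, mul_z_eq_mulLeft]
  have h1 : mulLeft ℂ (TensorProduct.comm ℂ A A (Coalgebra.comul (R := ℂ) a)) ∘ₗ
        (f.smulRight (1 : A)).lTensor A
      = Phi ((TensorProduct.comm ℂ A A).toLinearMap ∘ₗ Coalgebra.comul (R := ℂ)) ∘ₗ
          ((mulLeft ℂ a).rTensor A ∘ₗ
            (Phi ((TensorProduct.comm ℂ A A).toLinearMap ∘ₗ (𝒮 : A →ₗ[ℂ] A).rTensor A ∘ₗ
                Coalgebra.comul) ∘ₗ
              (f.smulRight (1 : A)).lTensor A)) := by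
    rw [opEq_two hS a]
    simp only [LinearMap.comp_assoc]
  rw [h1, LinearMap.trace_comp_comm']
  have h2 : ((mulLeft ℂ a).rTensor A ∘ₗ
        (Phi ((TensorProduct.comm ℂ A A).toLinearMap ∘ₗ (𝒮 : A →ₗ[ℂ] A).rTensor A ∘ₗ
            Coalgebra.comul) ∘ₗ
          (f.smulRight (1 : A)).lTensor A)) ∘ₗ
        Phi ((TensorProduct.comm ℂ A A).toLinearMap ∘ₗ Coalgebra.comul (R := ℂ))
      = (mulLeft ℂ a).rTensor A ∘ₗ
          (Phi ((TensorProduct.comm ℂ A A).toLinearMap ∘ₗ (𝒮 : A →ₗ[ℂ] A).rTensor A ∘ₗ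
              Coalgebra.comul) ∘ₗ
            ((f.smulRight (1 : A)).lTensor A ∘ₗ
              Phi ((TensorProduct.comm ℂ A A).toLinearMap ∘ₗ Coalgebra.comul (R := ℂ)))) := by
    simp only [LinearMap.comp_assoc]
  rw [h2, traceC_two, trace_smulRight', ← hτ a]

end Traces

end HopfTraceAux

theorem trace_of_left_multiplication_is_invariant
    {A : Type*} [Ring A] [HopfAlgebra ℂ A] [FiniteDimensional ℂ A]
    (hS : HopfAlgebra.antipode (R := ℂ) (A := A) ∘ₗ HopfAlgebra.antipode (R := ℂ) (A := A)
      = LinearMap.id)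
    (τ : A →ₗ[ℂ] ℂ)
    (hτ : ∀ a : A, τ a = LinearMap.trace ℂ A (LinearMap.mulLeft ℂ a)) :
    (∀ a : A, TensorProduct.rid ℂ A (τ.lTensor A (Coalgebra.comul (R := ℂ) a)) = τ a • 1) ∧
    (∀ a : A, TensorProduct.lid ℂ A (τ.rTensor A (Coalgebra.comul (R := ℂ) a)) = τ a • 1) ∧
    τ ≠ 0 ∧ τ 1 = (Module.finrank ℂ A : ℂ) := by
  classical
  have hnontriv : Nontrivial A := by
    refine ⟨1, 0, fun h10 => ?_⟩
    have hc := Bialgebra.counit_one (R := ℂ) (A := A)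
    rw [h10, map_zero] at hc
    exact one_ne_zero hc.symm
  have hτ1 : τ 1 = (Module.finrank ℂ A : ℂ) := by
    rw [hτ 1, LinearMap.mulLeft_one, LinearMap.trace_id]
  have hτne : τ ≠ 0 := by
    intro h0
    rw [h0, LinearMap.zero_apply] at hτ1
    have hpos : (0 : ℕ) < Module.finrank ℂ A := Module.finrank_pos
    have : (Module.finrank ℂ A : ℂ) = 0 := hτ1.symm
    rw [Nat.cast_eq_zero] at this
    exact hpos.ne' this
  refine ⟨fun a => ?_, fun a => ?_, hτne, hτ1⟩
  · have hzero : ∀ f : Module.Dual ℂ A,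
        f (TensorProduct.rid ℂ A (τ.lTensor A (Coalgebra.comul (R := ℂ) a)) - τ a • 1) = 0 :=
      fun f => by
        rw [map_sub, map_smul, HopfTraceAux.invariance_one hS τ hτ f a, smul_eq_mul, sub_self]
    exact sub_eq_zero.mp ((Module.forall_dual_apply_eq_zero_iff ℂ _).mp hzero)
  · have hzero : ∀ f : Module.Dual ℂ A,
        f (TensorProduct.lid ℂ A (τ.rTensor A (Coalgebra.comul (R := ℂ) a)) - τ a • 1) = 0 :=
      fun f => by
        rw [map_sub, map_smul, HopfTraceAux.invariance_two hS τ hτ f a, smul_eq_mul, sub_self]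
    exact sub_eq_zero.mp ((Module.forall_dual_apply_eq_zero_iff ℂ _).mp hzero)
end
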